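/- arXiv:2508.04789 — 9 statements merged into one kernel-verified Lean document; each statement's English description precedes it below -/
import Mathlib

section
/- For any two matroids M_1 and M_2 and any k > 0, the k-th chain characteristic polynomial is multiplicative over direct sums: χ^k_{M_1 ⊕ M_2}(t_1,…,t_k) = χ^k_{M_1}(t_1,…,t_k) · χ^k_{M_2}(t_1,…,t_k). -/
open Finset

def IsMatroidRk (α : Type*) [DecidableEq α] [Fintype α] (rk : Finset α → ℕ) : Prop :=
  rk ∅ = 0 ∧ (∀ a : α, rk {a} ≤ 1) ∧ (∀ A B : Finset α, A ⊆ B → rk A ≤ rk B) ∧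
    (∀ A B : Finset α, rk (A ∩ B) + rk (A ∪ B) ≤ rk A + rk B)

def chains (α : Type*) [DecidableEq α] [Fintype α] (k : ℕ) : Finset (Fin k → Finset α) :=
  Finset.univ.filter (fun f => ∀ i j : Fin k, i ≤ j → f i ⊆ f j)

def chainChar {α : Type*} [DecidableEq α] [Fintype α] (rk : Finset α → ℕ) (k : ℕ)
    {R : Type*} [CommRing R] (t : Fin k → R) : R :=
  ∑ f ∈ chains α k, ∏ i, (-1 : R) ^ (f i).card * t i ^ (rk Finset.univ - rk (f i))

/-- The rank function of the direct sum of two matroids, on the disjoint union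
of the ground sets. -/
noncomputable def directSumRk {α β : Type*} [DecidableEq α] [DecidableEq β]
    (rk₁ : Finset α → ℕ) (rk₂ : Finset β → ℕ) (S : Finset (α ⊕ β)) : ℕ :=
  rk₁ (S.preimage Sum.inl Sum.inl_injective.injOn) +
    rk₂ (S.preimage Sum.inr Sum.inr_injective.injOn)

lemma preimage_inl_eq_toLeft {α β : Type*} [DecidableEq α] [DecidableEq β]
    (S : Finset (α ⊕ β)) :
    S.preimage Sum.inl Sum.inl_injective.injOn = S.toLeft := by
  ext x; simp [Finset.mem_preimage]

lemma preimage_inr_eq_toRight {α β : Type*} [DecidableEq α] [DecidableEq β]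
    (S : Finset (α ⊕ β)) :
    S.preimage Sum.inr Sum.inr_injective.injOn = S.toRight := by
  ext x; simp [Finset.mem_preimage]

/-- χᵏ is multiplicative over direct sums. -/
theorem chainChar_directSum {α β : Type*} [DecidableEq α] [Fintype α]
    [DecidableEq β] [Fintype β] (rk₁ : Finset α → ℕ) (rk₂ : Finset β → ℕ)
    (h₁ : IsMatroidRk α rk₁) (h₂ : IsMatroidRk β rk₂) (k : ℕ) (hk : 0 < k)
    {R : Type*} [CommRing R] (t : Fin k → R) :
    chainChar (directSumRk rk₁ rk₂) k t = chainChar rk₁ k t * chainChar rk₂ k t := by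
  obtain ⟨-, -, hmono₁, -⟩ := h₁
  obtain ⟨-, -, hmono₂, -⟩ := h₂
  unfold chainChar
  rw [Finset.sum_mul_sum, ← Finset.sum_product']
  refine Finset.sum_nbij' (fun f => (fun i => (f i).toLeft, fun i => (f i).toRight))
    (fun p => fun i => (p.1 i).disjSum (p.2 i)) ?_ ?_ ?_ ?_ ?_
  · intro f hf
    simp only [chains, Finset.mem_filter, Finset.mem_univ, true_and] at hf ⊢
    rw [Finset.mem_product]
    constructor <;> simp only [chains, Finset.mem_filter, Finset.mem_univ, true_and] <;>
      intro i j hij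
    · exact Finset.toLeft_subset_toLeft (hf i j hij)
    · exact Finset.toRight_subset_toRight (hf i j hij)
  · intro p hp
    rw [Finset.mem_product] at hp
    obtain ⟨hp1, hp2⟩ := hp
    simp only [chains, Finset.mem_filter, Finset.mem_univ, true_and] at hp1 hp2 ⊢
    intro i j hij
    intro x hx
    rw [Finset.mem_disjSum] at hx ⊢
    rcases hx with ⟨a, ha, rfl⟩ | ⟨b, hb, rfl⟩
    · exact Or.inl ⟨a, hp1 i j hij ha, rfl⟩
    · exact Or.inr ⟨b, hp2 i j hij hb, rfl⟩
  · intro f hf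
    funext i
    exact Finset.toLeft_disjSum_toRight
  · intro p hp
    ext : 1 <;> funext i <;> simp
  · intro f hf
    rw [← Finset.prod_mul_distrib]
    refine Finset.prod_congr rfl fun i _ => ?_
    dsimp only
    have hcard : (f i).card = (f i).toLeft.card + (f i).toRight.card :=
      Finset.card_toLeft_add_card_toRight.symm
    have huniv : (Finset.univ : Finset (α ⊕ β)).toLeft = (Finset.univ : Finset α) := by
      ext x; simp
    have huniv' : (Finset.univ : Finset (α ⊕ β)).toRight = (Finset.univ : Finset β) := by
      ext x; simp
    have hrk : directSumRk rk₁ rk₂ Finset.univ - directSumRk rk₁ rk₂ (f i)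
        = (rk₁ Finset.univ - rk₁ (f i).toLeft) + (rk₂ Finset.univ - rk₂ (f i).toRight) := by
      unfold directSumRk
      rw [preimage_inl_eq_toLeft, preimage_inr_eq_toRight,
        preimage_inl_eq_toLeft, preimage_inr_eq_toRight, huniv, huniv']
      have e1 := hmono₁ (f i).toLeft Finset.univ (Finset.subset_univ _)
      have e2 := hmono₂ (f i).toRight Finset.univ (Finset.subset_univ _)
      omega
    rw [hrk, hcard, pow_add, pow_add]
    ring
end

section
/- For any two matroids M_1 and M_2 and any k ≥ 1, the k-th chain Tutte polynomial is multiplicative over direct sums: T^k_{M_1⊕M_2}((x_i);(y_i)) = T^k_{M_1}((x_i);(y_i)) · T^k_{M_2}((x_i);(y_i)). -/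
open Finset

/-- The k-th chain Whitney rank generating polynomial. -/
def chainWhitney {α : Type*} [DecidableEq α] [Fintype α] (rk : Finset α → ℕ) (k : ℕ)
    {R : Type*} [CommRing R] (a b : Fin k → R) : R :=
  ∑ f ∈ chains α k, ∏ i,
    a i ^ (rk Finset.univ - rk (f i)) * b i ^ ((f i).card - rk (f i))

/-- The k-th chain Tutte polynomial. -/
def chainTutte {α : Type*} [DecidableEq α] [Fintype α] (rk : Finset α → ℕ) (k : ℕ)
    {R : Type*} [CommRing R] (x y : Fin k → R) : R :=
  chainWhitney rk k (fun i => x i - 1) (fun i => y i - 1)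

lemma rk_le_card {α : Type*} [DecidableEq α] [Fintype α] {rk : Finset α → ℕ}
    (h : IsMatroidRk α rk) (A : Finset α) : rk A ≤ A.card := by
  obtain ⟨h0, h1, hmono, hsub⟩ := h
  induction A using Finset.induction_on with
  | empty => simp [h0]
  | @insert a A ha ih =>
    have h2 : rk (insert a A) ≤ rk {a} + rk A := by
      have := hsub {a} A
      have h3 : rk ({a} ∪ A) ≤ rk ({a} ∩ A) + rk ({a} ∪ A) := Nat.le_add_left _ _
      have := le_trans h3 this
      simpa using this
    calc rk (insert a A) ≤ rk {a} + rk A := h2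
      _ ≤ 1 + A.card := add_le_add (h1 a) ih
      _ = (insert a A).card := by rw [Finset.card_insert_of_notMem ha]; omega

lemma preimage_inl_disjSum {α β : Type*} [DecidableEq α] [DecidableEq β]
    (s : Finset α) (t : Finset β) :
    (s.disjSum t).preimage Sum.inl Sum.inl_injective.injOn = s := by
  ext a; simp

lemma preimage_inr_disjSum {α β : Type*} [DecidableEq α] [DecidableEq β]
    (s : Finset α) (t : Finset β) :
    (s.disjSum t).preimage Sum.inr Sum.inr_injective.injOn = t := by
  ext b; simp

lemma disjSum_preimages {α β : Type*} [DecidableEq α] [DecidableEq β]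
    (S : Finset (α ⊕ β)) :
    (S.preimage Sum.inl Sum.inl_injective.injOn).disjSum
      (S.preimage Sum.inr Sum.inr_injective.injOn) = S := by
  ext c; cases c <;> simp

lemma preimage_univ_inl {α β : Type*} [DecidableEq α] [DecidableEq β] [Fintype α] [Fintype β] :
    (Finset.univ : Finset (α ⊕ β)).preimage Sum.inl Sum.inl_injective.injOn = Finset.univ := by
  ext a; simp

lemma preimage_univ_inr {α β : Type*} [DecidableEq α] [DecidableEq β] [Fintype α] [Fintype β] :
    (Finset.univ : Finset (α ⊕ β)).preimage Sum.inr Sum.inr_injective.injOn = Finset.univ := by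
  ext a; simp

lemma chainWhitney_directSum {α β : Type*} [DecidableEq α] [Fintype α]
    [DecidableEq β] [Fintype β] (rk₁ : Finset α → ℕ) (rk₂ : Finset β → ℕ)
    (h₁ : IsMatroidRk α rk₁) (h₂ : IsMatroidRk β rk₂) (k : ℕ)
    {R : Type*} [CommRing R] (a b : Fin k → R) :
    chainWhitney (directSumRk rk₁ rk₂) k a b =
      chainWhitney rk₁ k a b * chainWhitney rk₂ k a b := by
  unfold chainWhitney
  rw [Finset.sum_mul_sum, ← Finset.sum_product']
  refine Finset.sum_nbij'
    (fun f => (fun i => (f i).preimage Sum.inl Sum.inl_injective.injOn,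
               fun i => (f i).preimage Sum.inr Sum.inr_injective.injOn))
    (fun p => fun i => (p.1 i).disjSum (p.2 i)) ?_ ?_ ?_ ?_ ?_
  · intro f hf
    simp only [chains, Finset.mem_filter, Finset.mem_univ, true_and,
      Finset.mem_product] at hf ⊢
    exact ⟨fun i j hij => Finset.monotone_preimage Sum.inl_injective (hf i j hij),
           fun i j hij => Finset.monotone_preimage Sum.inr_injective (hf i j hij)⟩
  · intro p hp
    simp only [chains, Finset.mem_filter, Finset.mem_univ, true_and,
      Finset.mem_product] at hp ⊢
    exact fun i j hij => Finset.disjSum_mono (hp.1 i j hij) (hp.2 i j hij)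
  · intro f _
    funext i
    exact disjSum_preimages (f i)
  · intro p _
    exact Prod.ext (funext fun i => preimage_inl_disjSum _ _)
      (funext fun i => preimage_inr_disjSum _ _)
  · intro f hf
    rw [← Finset.prod_mul_distrib]
    refine Finset.prod_congr rfl fun i _ => ?_
    set s := (f i).preimage Sum.inl Sum.inl_injective.injOn with hs
    set t := (f i).preimage Sum.inr Sum.inr_injective.injOn with ht
    have hcard : (f i).card = s.card + t.card := by
      conv_lhs => rw [← disjSum_preimages (f i)]
      rw [Finset.card_disjSum]
    have hrk : directSumRk rk₁ rk₂ (f i) = rk₁ s + rk₂ t := rfl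
    have hrkuniv : directSumRk rk₁ rk₂ (Finset.univ : Finset (α ⊕ β)) =
        rk₁ Finset.univ + rk₂ Finset.univ := by
      unfold directSumRk; rw [preimage_univ_inl, preimage_univ_inr]
    have hr1 : rk₁ s ≤ rk₁ Finset.univ := h₁.2.2.1 s Finset.univ (Finset.subset_univ s)
    have hr2 : rk₂ t ≤ rk₂ Finset.univ := h₂.2.2.1 t Finset.univ (Finset.subset_univ t)
    have hc1 : rk₁ s ≤ s.card := rk_le_card h₁ s
    have hc2 : rk₂ t ≤ t.card := rk_le_card h₂ t
    rw [hrk, hrkuniv, hcard]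
    rw [show rk₁ Finset.univ + rk₂ Finset.univ - (rk₁ s + rk₂ t) =
        (rk₁ Finset.univ - rk₁ s) + (rk₂ Finset.univ - rk₂ t) by omega,
      show s.card + t.card - (rk₁ s + rk₂ t) = (s.card - rk₁ s) + (t.card - rk₂ t) by omega,
      pow_add, pow_add]
    ring

/-- the chain Tutte polynomial is multiplicative over direct sums. -/
theorem chainTutte_directSum {α β : Type*} [DecidableEq α] [Fintype α]
    [DecidableEq β] [Fintype β] (rk₁ : Finset α → ℕ) (rk₂ : Finset β → ℕ)
    (h₁ : IsMatroidRk α rk₁) (h₂ : IsMatroidRk β rk₂) (k : ℕ) (hk : 1 ≤ k)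
    {R : Type*} [CommRing R] (x y : Fin k → R) :
    chainTutte (directSumRk rk₁ rk₂) k x y =
      chainTutte rk₁ k x y * chainTutte rk₂ k x y := by
  unfold chainTutte
  exact chainWhitney_directSum rk₁ rk₂ h₁ h₂ k _ _
end

section
/- For any matroid M and any k ≥ 1, the k-th chain Tutte polynomial of the dual matroid satisfies T^k_{M*}(x_1,…,x_k; y_1,…,y_k) = T^k_M(y_k,…,y_1; x_k,…,x_1), that is, duality swaps the x and y variable lists while reversing their order. -/
open Finset

/-- The rank function of the dual matroid: rk*(S) = |S| − (rk(E) − rk(E−S)). -/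
def dualRk {α : Type*} [DecidableEq α] [Fintype α] (rk : Finset α → ℕ)
    (S : Finset α) : ℕ :=
  S.card - (rk Finset.univ - rk (Finset.univ \ S))

lemma rk_insert_le {α : Type*} [DecidableEq α] [Fintype α] {rk : Finset α → ℕ}
    (h : IsMatroidRk α rk) (A : Finset α) (a : α) : rk (insert a A) ≤ rk A + 1 := by
  obtain ⟨_, h1, _, hsub⟩ := h
  have := hsub A {a}
  have : rk (A ∪ {a}) ≤ rk A + rk {a} := le_trans (Nat.le_add_left _ _) this
  calc rk (insert a A) = rk (A ∪ {a}) := by rw [Finset.union_comm]; rfl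
    _ ≤ rk A + rk {a} := this
    _ ≤ rk A + 1 := by have := h1 a; omega

lemma rk_union_le_card {α : Type*} [DecidableEq α] [Fintype α] {rk : Finset α → ℕ}
    (h : IsMatroidRk α rk) (A B : Finset α) : rk (A ∪ B) ≤ rk A + B.card := by
  induction B using Finset.induction_on with
  | empty => simp
  | @insert b B hb ih =>
    rw [Finset.union_insert, Finset.card_insert_of_notMem hb]
    have := rk_insert_le h (A ∪ B) b
    omega

/-- duality swaps and reverses the variable lists of the chain
Tutte polynomial. -/
theorem chainTutte_dual {α : Type*} [DecidableEq α] [Fintype α]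
    (rk : Finset α → ℕ) (h : IsMatroidRk α rk) (k : ℕ) (hk : 1 ≤ k)
    {R : Type*} [CommRing R] (x y : Fin k → R) :
    chainTutte (dualRk rk) k x y =
      chainTutte rk k (fun i => y i.rev) (fun i => x i.rev) := by
  unfold chainTutte chainWhitney
  refine Finset.sum_nbij' (fun f => fun i => Finset.univ \ f i.rev)
    (fun g => fun i => Finset.univ \ g i.rev) ?_ ?_ ?_ ?_ ?_
  · intro f hf
    simp only [chains, Finset.mem_filter, Finset.mem_univ, true_and] at hf ⊢
    intro i j hij
    exact Finset.sdiff_subset_sdiff le_rfl (hf _ _ (by rwa [Fin.rev_le_rev]))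
  · intro g hg
    simp only [chains, Finset.mem_filter, Finset.mem_univ, true_and] at hg ⊢
    intro i j hij
    exact Finset.sdiff_subset_sdiff le_rfl (hg _ _ (by rwa [Fin.rev_le_rev]))
  · intro f hf; funext i; simp
  · intro g hg; funext i; simp
  · intro f hf
    conv_rhs => rw [← Equiv.prod_comp (Fin.revPerm) (fun i => _)]
    refine Finset.prod_congr rfl fun j _ => ?_
    simp only [Fin.revPerm_apply, Fin.rev_rev]
    rw [mul_comm]
    congr 1
    · congr 1
      have hmono := h.2.2.1
      have h1 : rk (Finset.univ \ f j) ≤ rk Finset.univ :=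
        hmono _ _ (Finset.sdiff_subset)
      have h2 : rk Finset.univ ≤ rk (Finset.univ \ f j) + (f j).card := by
        have := rk_union_le_card h (Finset.univ \ f j) (f j)
        have he : (Finset.univ \ f j) ∪ f j = Finset.univ := by
          rw [Finset.sdiff_union_self_eq_union]; simp
        rwa [he] at this
      have h3 : rk (Finset.univ \ f j) ≤ (Finset.univ \ f j).card := rk_le_card h _
      have h4 : (f j).card + (Finset.univ \ f j).card = (Finset.univ : Finset α).card := by
        rw [add_comm, Finset.card_sdiff_add_card_eq_card (Finset.subset_univ _)]
      simp only [dualRk, Finset.sdiff_self, h.1, Finset.card_univ] at *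
      omega
    · congr 1
      have hmono := h.2.2.1
      have h1 : rk (Finset.univ \ f j) ≤ rk Finset.univ :=
        hmono _ _ (Finset.sdiff_subset)
      have h2 : rk Finset.univ ≤ rk (Finset.univ \ f j) + (f j).card := by
        have := rk_union_le_card h (Finset.univ \ f j) (f j)
        have he : (Finset.univ \ f j) ∪ f j = Finset.univ := by
          rw [Finset.sdiff_union_self_eq_union]; simp
        rwa [he] at this
      have h3 : rk (Finset.univ \ f j) ≤ (Finset.univ \ f j).card := rk_le_card h _
      have h4 : (f j).card + (Finset.univ \ f j).card = (Finset.univ : Finset α).card := by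
        rw [add_comm, Finset.card_sdiff_add_card_eq_card (Finset.subset_univ _)]
      simp only [dualRk, Finset.sdiff_self, h.1] at *
      omega
end

section
/- For any matroid M and any k ≥ 1, the (k+1)-th chain Tutte polynomial determines the k-th via the specialization T^{k+1}_M(2, 2x_1−1, x_2,…,x_k; 2, 2^{-1}y_1 + 2^{-1}, y_2,…,y_k) = 2^{rk(M)} · T^k_M(x_1,…,x_k; y_1,…,y_k). -/
/-!
A chain `S₀ ⊆ S₁ ⊆ ⋯` of length `k + 2` is a chain `S₁ ⊆ ⋯` of length `k + 1` together with an
arbitrary `S₀ ⊆ S₁`. The variables attached to `S₀` are `x = y = 2`, so its factor is `1` and the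
sum over `S₀` contributes `2^{|S₁|}`. Those attached to `S₁` are rescaled so that `x - 1` doubles
and `y - 1` halves, and `2^{|S₁|} · 2^{r(M) - r(S₁)} · 2^{-(|S₁| - r(S₁))} = 2^{r(M)}`; the
natural-number exponents are honest differences because `r(S₁) ≤ |S₁|` and `r(S₁) ≤ r(M)`.
-/

open Finset

namespace IsMatroidRk

variable {α : Type*} [DecidableEq α] [Fintype α] {rk : Finset α → ℕ}

theorem rk_le_card (h : IsMatroidRk α rk) (S : Finset α) : rk S ≤ S.card := by
  induction S using Finset.induction_on with
  | empty => simp [h.1]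
  | @insert a S ha ih =>
    calc rk (insert a S) ≤ rk ({a} ∩ S) + rk ({a} ∪ S) := Nat.le_add_left _ _
      _ ≤ rk {a} + rk S := h.2.2.2 {a} S
      _ ≤ 1 + S.card := add_le_add (h.2.1 a) ih
      _ = (insert a S).card := by rw [card_insert_of_notMem ha, add_comm]

theorem rk_le_rk_univ (h : IsMatroidRk α rk) (S : Finset α) : rk S ≤ rk univ :=
  h.2.2.1 S univ (subset_univ S)

end IsMatroidRk

section Chains

variable {α : Type*} [DecidableEq α] [Fintype α]

theorem mem_chains_iff_monotone {k : ℕ} {f : Fin k → Finset α} :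
    f ∈ chains α k ↔ Monotone f := by
  simp [chains, Monotone]

theorem cons_mem_chains_iff {k : ℕ} {S : Finset α} {g : Fin (k + 1) → Finset α} :
    Fin.cons S g ∈ chains α (k + 2) ↔ S ⊆ g 0 ∧ g ∈ chains α (k + 1) := by
  simp only [mem_chains_iff_monotone]
  exact monotone_vecCons

theorem sum_chains_succ {M : Type*} [AddCommMonoid M] {k : ℕ}
    (F : (Fin (k + 2) → Finset α) → M) :
    ∑ f ∈ chains α (k + 2), F f =
      ∑ g ∈ chains α (k + 1), ∑ S ∈ (g 0).powerset, F (Fin.cons S g) := by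
  rw [← Finset.sum_equiv (Fin.consEquiv fun _ => Finset α)
    (s := univ.filter fun p => p.1 ⊆ p.2 0 ∧ p.2 ∈ chains α (k + 1))
    (fun _ => by simp only [mem_filter, mem_univ, true_and]; exact cons_mem_chains_iff.symm)
    (fun _ _ => rfl)]
  exact Finset.sum_finset_product_right _ _ _ (fun p => by simp [and_comm])

end Chains

section Whitney

variable {α : Type*} [DecidableEq α] [Fintype α] {k : ℕ}

theorem chainWhitney_cons {R : Type*} [CommRing R] (rk : Finset α → ℕ) (a₀ b₀ : R)
    (a b : Fin (k + 1) → R) :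
    chainWhitney rk (k + 2) (Fin.cons a₀ a) (Fin.cons b₀ b) =
      ∑ g ∈ chains α (k + 1),
        (∑ S ∈ (g 0).powerset, a₀ ^ (rk univ - rk S) * b₀ ^ (S.card - rk S)) *
          ∏ i, a i ^ (rk univ - rk (g i)) * b i ^ ((g i).card - rk (g i)) := by
  rw [chainWhitney, sum_chains_succ]
  refine sum_congr rfl fun g _ => ?_
  rw [sum_mul]
  refine sum_congr rfl fun S _ => ?_
  rw [Fin.prod_univ_succ]
  simp only [Fin.cons_zero, Fin.cons_succ]

theorem chainWhitney_cons_one_one {R : Type*} [CommRing R] (rk : Finset α → ℕ)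
    (a b : Fin (k + 1) → R) :
    chainWhitney rk (k + 2) (Fin.cons 1 a) (Fin.cons 1 b) =
      ∑ g ∈ chains α (k + 1),
        2 ^ (g 0).card * ∏ i, a i ^ (rk univ - rk (g i)) * b i ^ ((g i).card - rk (g i)) := by
  simp only [chainWhitney_cons, one_pow, mul_one, sum_const, card_powerset, nsmul_eq_mul,
    Nat.cast_pow, Nat.cast_ofNat]

theorem pow_mul_mul_pow_sub_mul_inv_pow_sub {K : Type*} [Field K] {c : K} (hc : c ≠ 0)
    {m n r : ℕ} (hr : m ≤ r) (hn : m ≤ n) (a b : K) :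
    c ^ n * ((c * a) ^ (r - m) * (c⁻¹ * b) ^ (n - m)) = c ^ r * (a ^ (r - m) * b ^ (n - m)) := by
  obtain ⟨r, rfl⟩ := exists_add_of_le hr
  obtain ⟨n, rfl⟩ := exists_add_of_le hn
  simp only [Nat.add_sub_cancel_left, mul_pow, pow_add, inv_pow]
  field_simp

theorem two_pow_card_mul_prod_update {rk : Finset α → ℕ} (h : IsMatroidRk α rk) {K : Type*}
    [Field K] [NeZero (2 : K)] (g : Fin (k + 1) → Finset α) (a b : Fin (k + 1) → K) :
    2 ^ (g 0).card * ∏ i, Function.update a 0 (2 * a 0) i ^ (rk univ - rk (g i)) *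
        Function.update b 0 (2⁻¹ * b 0) i ^ ((g i).card - rk (g i)) =
      2 ^ rk univ * ∏ i, a i ^ (rk univ - rk (g i)) * b i ^ ((g i).card - rk (g i)) := by
  simp only [Fin.prod_univ_succ, Function.update_self,
    Function.update_of_ne (Fin.succ_ne_zero _)]
  rw [← mul_assoc, pow_mul_mul_pow_sub_mul_inv_pow_sub two_ne_zero (h.rk_le_rk_univ _)
    (h.rk_le_card _), mul_assoc]

theorem chainWhitney_cons_one_update {rk : Finset α → ℕ} (h : IsMatroidRk α rk) {K : Type*}
    [Field K] [NeZero (2 : K)] (a b : Fin (k + 1) → K) :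
    chainWhitney rk (k + 2) (Fin.cons 1 (Function.update a 0 (2 * a 0)))
        (Fin.cons 1 (Function.update b 0 (2⁻¹ * b 0))) =
      2 ^ rk univ * chainWhitney rk (k + 1) a b := by
  rw [chainWhitney_cons_one_one, chainWhitney, mul_sum]
  exact sum_congr rfl fun g _ => two_pow_card_mul_prod_update h g a b

end Whitney

theorem Fin.cons_update_zero_sub_one {R : Type*} [Ring R] {k : ℕ} (c v : R)
    (x : Fin (k + 1) → R) :
    (fun i => (Fin.cons c (Function.update x 0 v) : Fin (k + 2) → R) i - 1) =
      Fin.cons (c - 1) (Function.update (fun i => x i - 1) 0 (v - 1)) := by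
  funext i
  refine Fin.cases rfl (fun j => ?_) i
  exact Function.apply_update (fun _ t => t - 1) x 0 v j

/-- T^{k+1}_M(2, 2x₁−1, x₂, …, x_k; 2, y₁/2 + 1/2, y₂, …, y_k)
    = 2^{rk M} · T^k_M(x; y).  Here the case of general k ≥ 1 is stated with
    the index written as `k+1`. -/
theorem chainTutte_succ_specialization {α : Type*} [DecidableEq α] [Fintype α]
    (rk : Finset α → ℕ) (h : IsMatroidRk α rk) (k : ℕ)
    (x y : Fin (k + 1) → ℚ) :
    chainTutte rk (k + 2)
        (Fin.cons 2 (Function.update x 0 (2 * x 0 - 1)))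
        (Fin.cons 2 (Function.update y 0 (2⁻¹ * y 0 + 2⁻¹))) =
      2 ^ (rk Finset.univ) * chainTutte rk (k + 1) x y := by
  have hx : 2 * x 0 - 1 - 1 = 2 * (x 0 - 1) := by ring
  have hy : 2⁻¹ * y 0 + 2⁻¹ - 1 = 2⁻¹ * (y 0 - 1) := by ring
  have h2 : (2 : ℚ) - 1 = 1 := by norm_num
  rw [chainTutte, chainTutte, Fin.cons_update_zero_sub_one, Fin.cons_update_zero_sub_one,
    hx, hy, h2]
  exact chainWhitney_cons_one_update h _ _
end

section
/- For the uniform (Boolean/free) matroid U_{n,n} of rank n on n elements, the k-th chain characteristic polynomial equals χ^k_{U_{n,n}}(t_1,…,t_k) = ( (−1)^k ( 1 + Σ_{i=1}^k (−1)^i ∏_{j=1}^i t_j ) )^n. -/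
open Finset

section Aux
variable {R : Type*} [CommRing R]

/-- up-sets of `Fin k` -/
def upSets (k : ℕ) : Finset (Finset (Fin k)) :=
  univ.filter (fun U => ∀ i j : Fin k, i ≤ j → i ∈ U → j ∈ U)

lemma card_filter_le (k : ℕ) (m : ℕ) (hm : m ≤ k) :
    (univ.filter (fun i : Fin k => m ≤ (i : ℕ))).card = k - m := by
  rcases Nat.lt_or_ge m k with h | h
  · have : univ.filter (fun i : Fin k => m ≤ (i : ℕ)) = Ici ⟨m, h⟩ := by
      ext i; simp [Fin.le_def]
    rw [this, Fin.card_Ici]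
  · have : univ.filter (fun i : Fin k => m ≤ (i : ℕ)) = ∅ := by
      ext i
      simp only [mem_filter, mem_univ, true_and, Finset.notMem_empty, iff_false]
      have := i.isLt; omega
    simp [this]; omega

lemma upset_mem_iff {k : ℕ} {U : Finset (Fin k)}
    (hU : ∀ i j : Fin k, i ≤ j → i ∈ U → j ∈ U) (i : Fin k) :
    i ∈ U ↔ k - U.card ≤ (i : ℕ) := by
  constructor
  · intro hi
    have hsub : univ.filter (fun j : Fin k => (i : ℕ) ≤ (j : ℕ)) ⊆ U := by
      intro j hj
      simp only [mem_filter, mem_univ, true_and] at hj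
      exact hU i j (Fin.le_def.mpr hj) hi
    have := Finset.card_le_card hsub
    rw [card_filter_le k i (le_of_lt i.isLt)] at this
    omega
  · intro hi
    by_contra hiU
    have hsub : U ⊆ univ.filter (fun j : Fin k => (i : ℕ) + 1 ≤ (j : ℕ)) := by
      intro j hj
      simp only [mem_filter, mem_univ, true_and]
      by_contra hji
      exact hiU (hU j i (Fin.le_def.mpr (by omega)) hj)
    have := Finset.card_le_card hsub
    have hlt := i.isLt
    rw [card_filter_le k ((i : ℕ) + 1) (by omega)] at this
    omega

lemma prod_ite_const {α : Type*} [Fintype α] [DecidableEq α] (s : Finset α) (a b : R) :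
    (∏ x : α, (if x ∈ s then a else b)) = a ^ s.card * b ^ (Fintype.card α - s.card) := by
  rw [Finset.prod_ite, Finset.prod_const, Finset.prod_const, Finset.filter_mem_eq_inter,
    Finset.univ_inter]
  congr 2
  rw [Finset.filter_not, Finset.filter_mem_eq_inter, Finset.univ_inter,
    Finset.card_sdiff_of_subset (subset_univ s), Finset.card_univ]

lemma sum_upSets (k : ℕ) (t : Fin k → R) :
    (∑ U ∈ upSets k, ∏ i, (if i ∈ U then (-1 : R) else t i)) =
      (-1 : R) ^ k *
        (1 + ∑ i : Fin k, (-1 : R) ^ ((i : ℕ) + 1) *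
          ∏ j ∈ Finset.univ.filter (fun j : Fin k => j ≤ i), t j) := by
  have key : (∑ U ∈ upSets k, ∏ i, (if i ∈ U then (-1 : R) else t i)) =
      ∑ m : Fin (k+1), ∏ i : Fin k,
        (if i ∈ univ.filter (fun i : Fin k => (m : ℕ) ≤ (i : ℕ)) then (-1 : R) else t i) := by
    symm
    refine Finset.sum_bij' (fun m _ => univ.filter (fun i : Fin k => (m : ℕ) ≤ (i : ℕ)))
      (fun U _ => (⟨k - U.card, by omega⟩ : Fin (k+1))) ?_ ?_ ?_ ?_ ?_
    · intro m _
      simp only [upSets, mem_filter, mem_univ, true_and]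
      intro i j hij hi
      exact le_trans hi (Fin.le_def.mp hij)
    · intro U hU; exact mem_univ _
    · intro m _
      have hcard : (univ.filter (fun i : Fin k => (m : ℕ) ≤ (i : ℕ))).card = k - m :=
        card_filter_le k m (by omega)
      apply Fin.ext
      simp only [hcard]
      omega
    · intro U hU
      simp only [upSets, mem_filter, mem_univ, true_and] at hU
      ext i
      simp only [mem_filter, mem_univ, true_and]
      exact (upset_mem_iff hU i).symm
    · intro m _; rfl
  rw [key]
  have step : ∀ m : Fin (k+1),
      (∏ i : Fin k, (if i ∈ univ.filter (fun i : Fin k => (m : ℕ) ≤ (i : ℕ)) then (-1 : R) else t i))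
      = (-1 : R) ^ (k - (m : ℕ)) * ∏ j ∈ univ.filter (fun j : Fin k => (j : ℕ) < (m : ℕ)), t j := by
    intro m
    rw [Finset.prod_ite]
    congr 1
    · rw [Finset.prod_const, Finset.filter_mem_eq_inter, Finset.univ_inter,
        card_filter_le k m (by omega)]
    · apply Finset.prod_congr
      · ext j; simp
      · intros; rfl
  simp only [step]
  rw [Fin.sum_univ_succ]
  have h0 : (univ.filter (fun j : Fin k => (j : ℕ) < ((0 : Fin (k+1)) : ℕ))) = ∅ := by
    ext j; simp
  rw [h0]
  simp only [Finset.prod_empty, Fin.val_zero, Nat.sub_zero, mul_one]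
  rw [mul_add, mul_one, Finset.mul_sum]
  congr 1
  apply Finset.sum_congr rfl
  intro i _
  have hset : (univ.filter (fun j : Fin k => (j : ℕ) < ((i.succ : Fin (k+1)) : ℕ)))
      = univ.filter (fun j : Fin k => j ≤ i) := by
    ext j
    simp only [mem_filter, mem_univ, true_and, Fin.val_succ, Nat.lt_succ_iff, Fin.le_def]
  rw [hset, ← mul_assoc]
  congr 1
  have hik : (i : ℕ) + 1 ≤ k := i.isLt
  have hval : ((i.succ : Fin (k+1)) : ℕ) = (i : ℕ) + 1 := rfl
  rw [hval]
  have h2 : k + ((i : ℕ) + 1) = (k - ((i : ℕ) + 1)) + 2 * ((i : ℕ) + 1) := by omega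
  rw [show (-1 : R) ^ k * (-1 : R) ^ ((i : ℕ) + 1) = (-1 : R) ^ (k + ((i : ℕ) + 1)) from
    (pow_add _ _ _).symm, h2, pow_add, pow_mul]
  simp

end Aux

/-- the chain characteristic polynomial of the Boolean matroid
`U_{n,n}` (ground set `Fin n`, rank function the cardinality). -/
theorem chainChar_uniform {n k : ℕ} {R : Type*} [CommRing R] (t : Fin k → R) :
    chainChar (α := Fin n) (fun S => S.card) k t =
      ((-1 : R) ^ k *
        (1 + ∑ i : Fin k, (-1 : R) ^ ((i : ℕ) + 1) *
          ∏ j ∈ Finset.univ.filter (fun j : Fin k => j ≤ i), t j)) ^ n := by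
  rw [← sum_upSets k t]
  have hn : ((∑ U ∈ upSets k, ∏ i, (if i ∈ U then (-1 : R) else t i)) ^ n)
      = ∑ g ∈ Fintype.piFinset (fun _ : Fin n => upSets k),
          ∏ x : Fin n, ∏ i, (if i ∈ g x then (-1 : R) else t i) := by
    calc ((∑ U ∈ upSets k, ∏ i, (if i ∈ U then (-1 : R) else t i)) ^ n)
        = ∏ _x : Fin n, ∑ U ∈ upSets k, ∏ i, (if i ∈ U then (-1 : R) else t i) := by
          rw [Finset.prod_const, Finset.card_univ, Fintype.card_fin]
      _ = _ := Finset.prod_univ_sum _ _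
  rw [hn]
  unfold chainChar
  refine Finset.sum_bij' (fun f _ => fun x => univ.filter (fun i : Fin k => x ∈ f i))
    (fun g _ => fun i => univ.filter (fun x : Fin n => i ∈ g x)) ?_ ?_ ?_ ?_ ?_
  · intro f hf
    simp only [chains, mem_filter, mem_univ, true_and] at hf
    rw [Fintype.mem_piFinset]
    intro x
    simp only [upSets, mem_filter, mem_univ, true_and]
    intro i j hij hi
    exact hf i j hij hi
  · intro g hg
    rw [Fintype.mem_piFinset] at hg
    simp only [chains, mem_filter, mem_univ, true_and]
    intro i j hij x hx
    simp only [mem_filter, mem_univ, true_and] at hx ⊢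
    have := hg x
    simp only [upSets, mem_filter, mem_univ, true_and] at this
    exact this i j hij hx
  · intro f _
    funext i
    ext x
    simp
  · intro g _
    funext x
    ext i
    simp
  · intro f _
    rw [Finset.prod_comm]
    apply Finset.prod_congr rfl
    intro i _
    have : ∀ x : Fin n,
        (if i ∈ univ.filter (fun i : Fin k => x ∈ f i) then (-1 : R) else t i)
        = (if x ∈ f i then (-1 : R) else t i) := by
      intro x; simp
    simp only [this]
    rw [prod_ite_const (f i) (-1 : R) (t i), Fintype.card_fin, Finset.card_univ,
      Fintype.card_fin]
end

section
/- For any simple matroid M and any chain of flats X_1 ⊆ ⋯ ⊆ X_k, the sign of the k-th chain Möbius function is sgn(μ^k(X_1,…,X_k)) = ∏_{i=1}^k (−1)^{rk(X_i)}; in particular μ^k(X_1,…,X_k) is never zero on chains of flats of a simple matroid. -/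
open Finset

/-- A flat of a matroid: adding any element raises the rank. -/
def IsFlat {α : Type*} [DecidableEq α] [Fintype α] (rk : Finset α → ℕ)
    (F : Finset α) : Prop :=
  ∀ a : α, a ∉ F → rk F < rk (insert a F)

instance {α : Type*} [DecidableEq α] [Fintype α] (rk : Finset α → ℕ)
    (F : Finset α) : Decidable (IsFlat rk F) := by
  unfold IsFlat; infer_instance

/-- The closure of a set: all elements not raising the rank. -/
def matCl {α : Type*} [DecidableEq α] [Fintype α] (rk : Finset α → ℕ)
    (S : Finset α) : Finset α :=
  Finset.univ.filter (fun a => rk (insert a S) = rk S)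

/-- The k-th chain Möbius function on a chain of flats. -/
def chainMu {α : Type*} [DecidableEq α] [Fintype α] (rk : Finset α → ℕ) (k : ℕ)
    (X : Fin k → Finset α) : ℤ :=
  ∑ f ∈ (chains α k).filter (fun f => ∀ i, matCl rk (f i) = X i),
    ∏ i, (-1 : ℤ) ^ (f i).card

/-- A matroid is simple if singletons have rank 1 and pairs rank 2. -/
def IsSimpleRk {α : Type*} [DecidableEq α] [Fintype α] (rk : Finset α → ℕ) : Prop :=
  (∀ a : α, rk {a} = 1) ∧ ∀ a b : α, a ≠ b → rk {a, b} = 2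

/-!
Fix the second-to-last set `A` of a chain and sum over the last one, `B ⊇ A` with `cl B = X_k`.
If `A` is not yet the flat `X_{k-1} = cl A`, an element of `X_{k-1} \ A` is a loop over `A`, so
adding or removing it is a sign-reversing involution and the sum vanishes. Hence
`μ^k(X_1, …, X_k) = μ(X_{k-1}, X_k) μ^{k-2}(X_1, …, X_{k-2})` and `μ^1(X_1) = μ(∅, X_1)` (`∅` is a
flat as `M` is simple), where `μ(Y, Z) = ∑_{D ⊆ Z \ Y, rk (Y ∪ D) = rk Z} (-1)^|D|` is the Möbius
function of the lattice of flats. Its sign is `(-1)^(rk Z - rk Y)`, by deletion–contraction on an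
element `e ∈ Z \ Y`: if contracting `e` makes another element a loop, the contracted term cancels
and the deleted one has the right sign by induction; otherwise both terms do.
-/

namespace IsMatroidRk

variable {α : Type*} [DecidableEq α] [Fintype α] {rk : Finset α → ℕ}

theorem mono (h : IsMatroidRk α rk) {A B : Finset α} (hAB : A ⊆ B) : rk A ≤ rk B :=
  h.2.2.1 A B hAB

theorem rk_insert_le (h : IsMatroidRk α rk) (A : Finset α) (a : α) :
    rk (insert a A) ≤ rk A + 1 := by
  have hsub := h.2.2.2 {a} A
  rw [← insert_eq] at hsub
  have := h.2.1 a
  omega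

theorem rk_insert_of_subset (h : IsMatroidRk α rk) {A B : Finset α} (hAB : A ⊆ B) {a : α}
    (ha : rk (insert a A) = rk A) : rk (insert a B) = rk B := by
  have hsub := h.2.2.2 (insert a A) B
  rw [insert_union, union_eq_right.mpr hAB, ha] at hsub
  have := h.mono (subset_inter (subset_insert a A) hAB)
  have := h.mono (subset_insert a B)
  omega

theorem rk_union_of_forall_rk_insert (h : IsMatroidRk α rk) {U V : Finset α}
    (hU : ∀ a ∈ U, rk (insert a V) = rk V) : rk (U ∪ V) = rk V := by
  induction U using Finset.induction_on with
  | empty => rw [empty_union]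
  | insert a U _ ih =>
    rw [insert_union, ← ih fun b hb => hU b (mem_insert_of_mem hb)]
    exact h.rk_insert_of_subset subset_union_right (hU a (mem_insert_self a U))

end IsMatroidRk

section Closure

variable {α : Type*} [DecidableEq α] [Fintype α] {rk : Finset α → ℕ}

theorem mem_matCl {S : Finset α} {a : α} : a ∈ matCl rk S ↔ rk (insert a S) = rk S := by
  simp [matCl]

theorem subset_matCl (S : Finset α) : S ⊆ matCl rk S := fun a ha => by
  rw [mem_matCl, insert_eq_self.mpr ha]

theorem IsMatroidRk.rk_matCl (h : IsMatroidRk α rk) (S : Finset α) : rk (matCl rk S) = rk S := by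
  rw [← union_eq_left.mpr (subset_matCl S)]
  exact h.rk_union_of_forall_rk_insert fun a ha => mem_matCl.mp ha

theorem IsMatroidRk.matCl_eq_iff (h : IsMatroidRk α rk) {Z : Finset α} (hZ : IsFlat rk Z)
    {S : Finset α} : matCl rk S = Z ↔ S ⊆ Z ∧ rk S = rk Z := by
  constructor
  · rintro rfl
    exact ⟨subset_matCl S, (h.rk_matCl S).symm⟩
  · rintro ⟨hSZ, hrk⟩
    ext a
    rw [mem_matCl]
    constructor
    · intro ha
      by_contra haZ
      exact (hZ a haZ).ne' (h.rk_insert_of_subset hSZ ha)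
    · intro ha
      have := h.mono (insert_subset ha hSZ)
      have := h.mono (subset_insert a S)
      omega

theorem IsMatroidRk.matCl_eq_self (h : IsMatroidRk α rk) {Z : Finset α} (hZ : IsFlat rk Z) :
    matCl rk Z = Z :=
  (h.matCl_eq_iff hZ).mpr ⟨Subset.rfl, rfl⟩

theorem IsMatroidRk.isFlat_empty (h : IsMatroidRk α rk) (hs : ∀ a : α, rk {a} = 1) :
    IsFlat rk (∅ : Finset α) := fun a _ => by
  rw [insert_empty, hs a, h.1]
  exact one_pos

end Closure

section AltSpanSum

variable {α : Type*} [DecidableEq α] {rk : Finset α → ℕ}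

/-- For flats `Y ⊆ Z`, `altSpanSum rk Y (Z \ Y) (rk Z)` is the Möbius function `μ(Y, Z)` of the
lattice of flats. -/
def altSpanSum (rk : Finset α → ℕ) (Y E : Finset α) (r : ℕ) : ℤ :=
  ∑ D ∈ E.powerset, if rk (Y ∪ D) = r then (-1 : ℤ) ^ D.card else 0

theorem altSpanSum_insert {Y E : Finset α} {e : α} (he : e ∉ E) (r : ℕ) :
    altSpanSum rk Y (insert e E) r = altSpanSum rk Y E r - altSpanSum rk (insert e Y) E r := by
  rw [altSpanSum, sum_powerset_insert he, sub_eq_add_neg, altSpanSum, altSpanSum,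
    ← sum_neg_distrib]
  congr 1
  refine sum_congr rfl fun D hD => ?_
  have heD : e ∉ D := fun heD => he (mem_powerset.mp hD heD)
  rw [union_insert, ← insert_union, card_insert_of_notMem heD, pow_succ]
  split_ifs <;> ring

theorem altSpanSum_eq_zero_of_rk_insert_eq [Fintype α] (h : IsMatroidRk α rk) {Y E : Finset α}
    {a : α} (ha : a ∈ E) (hloop : rk (insert a Y) = rk Y) (r : ℕ) : altSpanSum rk Y E r = 0 := by
  rw [← insert_erase ha, altSpanSum_insert (notMem_erase a E), sub_eq_zero]
  refine sum_congr rfl fun D _ => ?_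
  rw [insert_union, h.rk_insert_of_subset subset_union_left hloop]

theorem altSpanSum_eq_zero_of_rk_lt [Fintype α] (h : IsMatroidRk α rk) {Y E : Finset α} {r : ℕ}
    (hr : rk (Y ∪ E) < r) : altSpanSum rk Y E r = 0 := by
  refine sum_eq_zero fun D hD => if_neg ?_
  have := h.mono (union_subset_union_right (mem_powerset.mp hD) : Y ∪ D ⊆ Y ∪ E)
  omega

theorem altSpanSum_sign [Fintype α] (h : IsMatroidRk α rk) {Y E : Finset α}
    (hE : ∀ a ∈ E, rk (insert a Y) = rk Y + 1) :
    0 < (-1 : ℤ) ^ rk (Y ∪ E) * (-1) ^ rk Y * altSpanSum rk Y E (rk (Y ∪ E)) := by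
  induction E using Finset.induction_on generalizing Y with
  | empty => simp [altSpanSum, ← pow_add, Even.neg_one_pow ⟨rk Y, rfl⟩]
  | insert e E he ih =>
    have hYe : rk (insert e Y) = rk Y + 1 := hE e (mem_insert_self e E)
    have hunion : Y ∪ insert e E = insert e Y ∪ E := by rw [union_insert, insert_union]
    set r := rk (Y ∪ insert e E)
    rw [altSpanSum_insert he]
    by_cases hloop : ∃ a ∈ E, rk (insert a (insert e Y)) = rk (insert e Y)
    · obtain ⟨a, haE, ha⟩ := hloop
      have hYa : rk (insert a Y) = rk Y + 1 := hE a (mem_insert_of_mem haE)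
      have hrE : rk (Y ∪ E) = r := by
        have hea : rk (insert e (insert a Y)) = rk (insert a Y) := by
          rw [insert_comm, ha, hYe, hYa]
        have hsub : insert a Y ⊆ Y ∪ E := insert_subset (mem_union_right Y haE) subset_union_left
        rw [← h.rk_insert_of_subset hsub hea, ← insert_union, ← hunion]
      rw [altSpanSum_eq_zero_of_rk_insert_eq h haE ha, sub_zero, ← hrE]
      exact ih fun b hb => hE b (mem_insert_of_mem hb)
    · push Not at hloop
      have hE' : ∀ a ∈ E, rk (insert a (insert e Y)) = rk (insert e Y) + 1 := fun a ha => by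
        have := h.rk_insert_le (insert e Y) a
        have := h.mono (subset_insert a (insert e Y))
        have := hloop a ha
        omega
      have hpos₂ := ih hE'
      rw [← hunion, hYe, pow_succ] at hpos₂
      have hnonneg₁ : 0 ≤ (-1 : ℤ) ^ r * (-1) ^ rk Y * altSpanSum rk Y E r := by
        rcases (h.mono (union_subset_union_right (subset_insert e E))).lt_or_eq with hlt | heq
        · rw [altSpanSum_eq_zero_of_rk_lt h hlt, mul_zero]
        · have := ih fun b hb => hE b (mem_insert_of_mem hb)
          rw [heq] at this
          exact this.le
      linear_combination hnonneg₁ + hpos₂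

theorem altSpanSum_sign_of_isFlat [Fintype α] (h : IsMatroidRk α rk) {Y Z : Finset α}
    (hY : IsFlat rk Y) (hYZ : Y ⊆ Z) :
    0 < (-1 : ℤ) ^ rk Z * (-1) ^ rk Y * altSpanSum rk Y (Z \ Y) (rk Z) := by
  have hsign := altSpanSum_sign h (Y := Y) (E := Z \ Y) fun a ha => by
    have := hY a (mem_sdiff.mp ha).2
    have := h.rk_insert_le Y a
    omega
  rwa [union_sdiff_of_subset hYZ] at hsign

end AltSpanSum

section Superset

variable {α : Type*} [DecidableEq α] [Fintype α] {rk : Finset α → ℕ}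

theorem sum_superset_matCl_eq_altSpanSum (h : IsMatroidRk α rk) {A Z : Finset α}
    (hZ : IsFlat rk Z) (hAZ : A ⊆ Z) :
    ∑ B, (if A ⊆ B ∧ matCl rk B = Z then (-1 : ℤ) ^ B.card else 0) =
      (-1) ^ A.card * altSpanSum rk A (Z \ A) (rk Z) := by
  calc ∑ B, (if A ⊆ B ∧ matCl rk B = Z then (-1 : ℤ) ^ B.card else 0)
      = ∑ B ∈ Icc A Z, if rk B = rk Z then (-1 : ℤ) ^ B.card else 0 := by
        rw [← sum_filter, ← sum_filter]
        congr 1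
        ext B
        simp [h.matCl_eq_iff hZ, and_assoc]
    _ = ∑ D ∈ (Z \ A).powerset, if rk (A ∪ D) = rk Z then (-1 : ℤ) ^ (A ∪ D).card else 0 := by
        rw [Icc_eq_image_powerset hAZ, sum_image]
        intro D₁ hD₁ D₂ hD₂ heq
        have h₁ := disjoint_of_subset_left (mem_powerset.mp hD₁) sdiff_disjoint
        have h₂ := disjoint_of_subset_left (mem_powerset.mp hD₂) sdiff_disjoint
        rw [← union_sdiff_cancel_left h₁.symm, ← union_sdiff_cancel_left h₂.symm]
        exact congrArg (· \ A) heq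
    _ = (-1) ^ A.card * altSpanSum rk A (Z \ A) (rk Z) := by
        rw [altSpanSum, mul_sum]
        refine sum_congr rfl fun D hD => ?_
        have hdisj := disjoint_of_subset_left (mem_powerset.mp hD) sdiff_disjoint
        rw [card_union_of_disjoint hdisj.symm, pow_add, mul_ite, mul_zero]

theorem sum_superset_matCl_eq_ite (h : IsMatroidRk α rk) {A Y Z : Finset α}
    (hA : matCl rk A = Y) (hYZ : Y ⊆ Z) (hZ : IsFlat rk Z) :
    ∑ B, (if A ⊆ B ∧ matCl rk B = Z then (-1 : ℤ) ^ B.card else 0) =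
      if A = Y then (-1) ^ Y.card * altSpanSum rk Y (Z \ Y) (rk Z) else 0 := by
  have hAY : A ⊆ Y := hA ▸ subset_matCl A
  rw [sum_superset_matCl_eq_altSpanSum h hZ (hAY.trans hYZ)]
  split_ifs with hAeq
  · rw [hAeq]
  · obtain ⟨x, hxY, hxA⟩ := exists_of_ssubset (hAY.ssubset_of_ne hAeq)
    have hloop : rk (insert x A) = rk A := mem_matCl.mp (hA ▸ hxY)
    rw [altSpanSum_eq_zero_of_rk_insert_eq h (mem_sdiff.mpr ⟨hYZ hxY, hxA⟩) hloop, mul_zero]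

end Superset

theorem Fintype.sum_fin_succ_fun {β M : Type*} [Fintype β] [AddCommMonoid M] {n : ℕ}
    (F : (Fin (n + 1) → β) → M) :
    ∑ f, F f = ∑ g : Fin n → β, ∑ b, F (Fin.snoc g b) := by
  rw [← (Fin.snocEquiv fun _ => β).sum_comp, Fintype.sum_prod_type, sum_comm]
  rfl

section Chains

variable {α : Type*} [DecidableEq α] [Fintype α]

theorem mem_chains {k : ℕ} {f : Fin k → Finset α} :
    f ∈ chains α k ↔ ∀ i j : Fin k, i ≤ j → f i ⊆ f j := by
  simp [chains]

theorem snoc_mem_chains {n : ℕ} {g : Fin n → Finset α} {B : Finset α} :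
    (Fin.snoc g B : Fin (n + 1) → Finset α) ∈ chains α (n + 1) ↔
      g ∈ chains α n ∧ ∀ i, g i ⊆ B := by
  simp [mem_chains, Fin.forall_fin_succ', Fin.le_last, forall_and]

theorem init_mem_chains {n : ℕ} {f : Fin (n + 1) → Finset α} (hf : f ∈ chains α (n + 1)) :
    Fin.init f ∈ chains α n :=
  (snoc_mem_chains.mp ((Fin.snoc_init_self f).symm ▸ hf)).1

end Chains

section ChainWeight

variable {α : Type*} [DecidableEq α] [Fintype α] {rk : Finset α → ℕ}

def chainWeight (rk : Finset α → ℕ) {k : ℕ} (X f : Fin k → Finset α) : ℤ :=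
  if f ∈ chains α k ∧ ∀ i, matCl rk (f i) = X i then ∏ i, (-1 : ℤ) ^ (f i).card else 0

theorem chainMu_eq_sum_chainWeight (k : ℕ) (X : Fin k → Finset α) :
    chainMu rk k X = ∑ f, chainWeight rk X f := by
  rw [chainMu, Finset.sum_filter]
  simp only [chainWeight, ← Finset.sum_filter]
  congr 1
  ext f
  simp

theorem chainWeight_mul_congr {k : ℕ} {X f : Fin k → Finset α} {a b : ℤ}
    (hab : f ∈ chains α k → (∀ i, matCl rk (f i) = X i) → a = b) :
    chainWeight rk X f * a = chainWeight rk X f * b := by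
  unfold chainWeight
  split_ifs with hf
  · rw [hab hf.1 hf.2]
  · rw [zero_mul, zero_mul]

theorem chainWeight_snoc {n : ℕ} (X : Fin (n + 1) → Finset α) (g : Fin n → Finset α)
    (B : Finset α) :
    chainWeight rk X (Fin.snoc g B) = chainWeight rk (Fin.init X) g *
      if (∀ i, g i ⊆ B) ∧ matCl rk B = X (Fin.last n) then (-1 : ℤ) ^ B.card else 0 := by
  rw [chainWeight, chainWeight, ite_zero_mul_ite_zero]
  simp only [snoc_mem_chains, Fin.forall_fin_succ', Fin.snoc_castSucc, Fin.snoc_last,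
    Fin.prod_univ_castSucc, Fin.init]
  exact if_congr (by tauto) rfl rfl

theorem chainMu_succ {n : ℕ} (X : Fin (n + 1) → Finset α) :
    chainMu rk (n + 1) X = ∑ g, chainWeight rk (Fin.init X) g *
      ∑ B, if (∀ i, g i ⊆ B) ∧ matCl rk B = X (Fin.last n) then (-1 : ℤ) ^ B.card else 0 := by
  simp only [chainMu_eq_sum_chainWeight, Fintype.sum_fin_succ_fun, chainWeight_snoc, mul_sum]

end ChainWeight

section Recursion

variable {α : Type*} [DecidableEq α] [Fintype α] {rk : Finset α → ℕ}

theorem chainMu_zero (X : Fin 0 → Finset α) : chainMu rk 0 X = 1 := by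
  simp [chainMu_eq_sum_chainWeight, chainWeight, mem_chains]

theorem chainMu_one (h : IsMatroidRk α rk) (hs : ∀ a : α, rk {a} = 1) (X : Fin 1 → Finset α)
    (hX : IsFlat rk (X 0)) : chainMu rk 1 X = altSpanSum rk ∅ (X 0) (rk (X 0)) := by
  have hcl : matCl rk ∅ = ∅ := h.matCl_eq_self (h.isFlat_empty hs)
  have := sum_superset_matCl_eq_ite h hcl (empty_subset (X 0)) hX
  simp_all [chainMu_succ, chainWeight, mem_chains]

theorem chainMu_add_two (h : IsMatroidRk α rk) {m : ℕ} (X : Fin (m + 2) → Finset α)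
    (hX : X ∈ chains α (m + 2)) (hflat : ∀ i, IsFlat rk (X i)) :
    chainMu rk (m + 2) X =
      altSpanSum rk (X (Fin.last m).castSucc) (X (Fin.last (m + 1)) \ X (Fin.last m).castSucc)
        (rk (X (Fin.last (m + 1)))) * chainMu rk m (Fin.init (Fin.init X)) := by
  set Y := X (Fin.last m).castSucc
  set Z := X (Fin.last (m + 1))
  set μYZ := altSpanSum rk Y (Z \ Y) (rk Z)
  have hYZ : Y ⊆ Z := mem_chains.mp hX _ _ (Fin.le_last _)
  have htop : ∀ g : Fin (m + 1) → Finset α,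
      chainWeight rk (Fin.init X) g *
        ∑ B, (if (∀ i, g i ⊆ B) ∧ matCl rk B = Z then (-1 : ℤ) ^ B.card else 0) =
      chainWeight rk (Fin.init X) g * if g (Fin.last m) = Y then (-1) ^ Y.card * μYZ else 0 :=
    fun g => chainWeight_mul_congr fun hg hcl => by
      have hsub : ∀ B, (∀ i, g i ⊆ B) ↔ g (Fin.last m) ⊆ B := fun B =>
        ⟨fun H => H _, fun H i => (mem_chains.mp hg i _ (Fin.le_last i)).trans H⟩
      simp_rw [hsub]
      exact sum_superset_matCl_eq_ite h (hcl (Fin.last m)) hYZ (hflat _)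
  rw [chainMu_succ, sum_congr rfl fun g _ => htop g, Fintype.sum_fin_succ_fun,
    chainMu_eq_sum_chainWeight, mul_sum]
  refine sum_congr rfl fun g _ => ?_
  simp only [chainWeight_snoc, Fin.snoc_last, mul_ite, mul_zero, sum_ite_eq', mem_univ, if_true]
  have hYY : (-1 : ℤ) ^ Y.card * (-1) ^ Y.card = 1 := by
    rw [← mul_pow, neg_one_mul, neg_neg, one_pow]
  split_ifs with hcond
  · linear_combination μYZ * chainWeight rk (Fin.init (Fin.init X)) g * hYY
  · have hzero : chainWeight rk (Fin.init (Fin.init X)) g = 0 := by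
      refine if_neg fun ⟨_, hcl⟩ => hcond ⟨fun i => ?_, h.matCl_eq_self (hflat _)⟩
      have hgX : g i ⊆ X i.castSucc.castSucc := (hcl i).subst (subset_matCl (g i))
      exact hgX.trans (mem_chains.mp hX _ _
        (Fin.castSucc_le_castSucc_iff.mpr (Fin.le_last (Fin.castSucc i))))
    rw [hzero, mul_zero, zero_mul]

end Recursion

/-- for a simple matroid the k-th chain Möbius function is nonzero
on every chain of flats, with sign ∏ᵢ (−1)^{rk Xᵢ}. -/
theorem chainMu_sign {α : Type*} [DecidableEq α] [Fintype α]
    (rk : Finset α → ℕ) (h : IsMatroidRk α rk) (hs : IsSimpleRk rk) (k : ℕ)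
    (X : Fin k → Finset α) (hX : X ∈ chains α k) (hflat : ∀ i, IsFlat rk (X i)) :
    0 < (∏ i, (-1 : ℤ) ^ (rk (X i))) * chainMu rk k X := by
  induction k using Nat.twoStepInduction with
  | zero => simp [chainMu_zero]
  | one =>
    have hμ := altSpanSum_sign_of_isFlat h (h.isFlat_empty hs.1) (empty_subset (X 0))
    rw [h.1, pow_zero, mul_one, sdiff_empty] at hμ
    rwa [chainMu_one h hs.1 X (hflat 0), Fin.prod_univ_one]
  | more m ih =>
    have hμ := altSpanSum_sign_of_isFlat h (hflat (Fin.last m).castSucc)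
      (mem_chains.mp hX _ _ (Fin.le_last _))
    have hinit := ih (Fin.init (Fin.init X)) (init_mem_chains (init_mem_chains hX)) fun _ => hflat _
    rw [chainMu_add_two h X hX hflat, Fin.prod_univ_castSucc, Fin.prod_univ_castSucc]
    calc 0 < _ := mul_pos hμ hinit
      _ = _ := by unfold Fin.init; ring
end

section
/- For any simple matroid M, the coefficients of the k-th chain characteristic polynomial χ^k_M alternate in sign by total degree: the coefficient of the monomial t_1^{d_1}⋯t_k^{d_k} has sign (−1)^{k·rk(M) − (d_1 + ⋯ + d_k)} whenever it is nonzero. -/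
open Finset

/-- The k-th chain characteristic polynomial as a multivariate polynomial over ℤ. -/
noncomputable def chainCharPoly {α : Type*} [DecidableEq α] [Fintype α]
    (rk : Finset α → ℕ) (k : ℕ) : MvPolynomial (Fin k) ℤ :=
  ∑ f ∈ chains α k, ∏ i,
    MvPolynomial.C ((-1 : ℤ) ^ (f i).card) *
      MvPolynomial.X i ^ (rk Finset.univ - rk (f i))


namespace ChainAlt

variable {α : Type*} [DecidableEq α] [Fintype α]

/-- an arbitrary linear ordering of the elements, via `Fintype.equivFin`. -/
noncomputable def ord (a : α) : ℕ := ((Fintype.equivFin α) a : ℕ)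

omit [DecidableEq α] in
lemma ord_inj {a b : α} (hab : ord a = ord b) : a = b := by
  have := Fin.ext (a := (Fintype.equivFin α) a) (b := (Fintype.equivFin α) b) hab
  exact (Fintype.equivFin α).injective this

variable {rk : Finset α → ℕ}

/-- `y` is dependent on `S`. -/
def Dep (rk : Finset α → ℕ) (S : Finset α) (y : α) : Prop := rk (insert y S) = rk S

instance (rk : Finset α → ℕ) (S : Finset α) (y : α) : Decidable (Dep rk S y) :=
  inferInstanceAs (Decidable (_ = _))

lemma rk_le_insert (h : IsMatroidRk α rk) (S : Finset α) (y : α) :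
    rk S ≤ rk (insert y S) := h.2.2.1 _ _ (Finset.subset_insert _ _)

lemma rk_insert_le (h : IsMatroidRk α rk) (S : Finset α) (y : α) :
    rk (insert y S) ≤ rk S + 1 := by
  have hsub := h.2.2.2 S {y}
  have h1 : rk (S ∪ {y}) = rk (insert y S) := by
    congr 1
    ext z; simp [or_comm]
  have := h.2.1 y
  omega

lemma dep_or (h : IsMatroidRk α rk) (S : Finset α) (y : α) :
    Dep rk S y ∨ rk (insert y S) = rk S + 1 := by
  have h1 := rk_le_insert h S y
  have h2 := rk_insert_le h S y
  unfold Dep; omega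

lemma dep_superset (h : IsMatroidRk α rk) {S T : Finset α} {y : α}
    (hd : Dep rk S y) (hST : S ⊆ T) : Dep rk T y := by
  have hsub := h.2.2.2 (insert y S) T
  have h1 : insert y S ∪ T = insert y T := by
    ext z; simp only [Finset.mem_union, Finset.mem_insert]
    constructor
    · rintro ((rfl | hz) | hz)
      · exact Or.inl rfl
      · exact Or.inr (hST hz)
      · exact Or.inr hz
    · rintro (rfl | hz)
      · exact Or.inl (Or.inl rfl)
      · exact Or.inr hz
  have h2 : rk S ≤ rk (insert y S ∩ T) :=
    h.2.2.1 _ _ (Finset.subset_inter (Finset.subset_insert _ _) hST)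
  have h3 : rk T ≤ rk (insert y T) := rk_le_insert h T y
  unfold Dep at *
  rw [h1] at hsub
  omega

lemma dep_insert_iff (h : IsMatroidRk α rk) {S : Finset α} {y : α}
    (hy : Dep rk S y) (z : α) : Dep rk (insert y S) z ↔ Dep rk S z := by
  have h1 : Dep rk (insert z S) y := dep_superset h hy (Finset.subset_insert _ _)
  unfold Dep at *
  have hc : insert z (insert y S) = insert y (insert z S) := Finset.insert_comm z y S
  rw [hc]
  omega

lemma dep_insert_iff' (h : IsMatroidRk α rk) {S T : Finset α} {x : α}
    (hS : Dep rk S x) (hsub : S ⊆ T) (z : α) :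
    Dep rk (insert x T) z ↔ Dep rk T z :=
  dep_insert_iff h (dep_superset h hS hsub) z

lemma dep_erase_iff (h : IsMatroidRk α rk) {S T : Finset α} {x : α}
    (hS : Dep rk S x) (hxS : x ∉ S) (hsub : S ⊆ T) (z : α) :
    Dep rk (T.erase x) z ↔ Dep rk T z := by
  by_cases hxT : x ∈ T
  · have h1 : S ⊆ T.erase x := Finset.subset_erase.mpr ⟨hsub, hxS⟩
    have h2 : Dep rk (T.erase x) x := dep_superset h hS h1
    have h3 := dep_insert_iff h h2 z
    rw [Finset.insert_erase hxT] at h3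
    exact h3.symm
  · rw [Finset.erase_eq_of_notMem hxT]

lemma rk_erase_of_dep (h : IsMatroidRk α rk) {T : Finset α} {x : α}
    (hx : x ∈ T) (hd : Dep rk (T.erase x) x) : rk (T.erase x) = rk T := by
  unfold Dep at hd
  rw [Finset.insert_erase hx] at hd
  omega

/-- Greedy scanning lemma: scanning the elements of `A \ B` in decreasing `ord`-order,
the deficiency `|A| - rk A` exceeds that of `B` by the number of "dependent" elements. -/
lemma scan (h : IsMatroidRk α rk) :
    ∀ n (A B : Finset α), A.card ≤ n → B ⊆ A →
    A.card + rk B = B.card + rk A +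
      ((A \ B).filter (fun y => Dep rk (B ∪ A.filter (fun z => ord y < ord z)) y)).card := by
  intro n
  induction n with
  | zero =>
    intro A B hA hBA
    have : A = ∅ := Finset.card_eq_zero.mp (Nat.le_zero.mp hA)
    subst this
    have : B = ∅ := Finset.subset_empty.mp hBA
    subst this
    simp
  | succ n ih =>
    intro A B hA hBA
    by_cases hAB : A = B
    · subst hAB; simp
    · have hne : (A \ B).Nonempty := by
        rw [Finset.sdiff_nonempty]
        intro hsub
        exact hAB (Finset.Subset.antisymm hsub hBA)
      obtain ⟨y, hy, hymin⟩ := Finset.exists_min_image (A \ B) ord hne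
      have hyA : y ∈ A := (Finset.mem_sdiff.mp hy).1
      have hyB : y ∉ B := (Finset.mem_sdiff.mp hy).2
      set A' := A.erase y with hA'def
      have hkey : A' = B ∪ A.filter (fun z => ord y < ord z) := by
        ext z
        simp only [hA'def, Finset.mem_erase, Finset.mem_union, Finset.mem_filter]
        constructor
        · rintro ⟨hzy, hzA⟩
          by_cases hzB : z ∈ B
          · exact Or.inl hzB
          · refine Or.inr ⟨hzA, ?_⟩
            have := hymin z (Finset.mem_sdiff.mpr ⟨hzA, hzB⟩)
            rcases Nat.lt_or_ge (ord y) (ord z) with h' | h'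
            · exact h'
            · exact absurd (ord_inj (Nat.le_antisymm h' this)) hzy
        · rintro (hzB | ⟨hzA, hzy⟩)
          · exact ⟨fun hzy => hyB (hzy ▸ hzB), hBA hzB⟩
          · exact ⟨by rintro rfl; omega, hzA⟩
      have hyA' : y ∉ A' := Finset.notMem_erase y A
      have hcard : A.card = A'.card + 1 := by
        rw [hA'def, Finset.card_erase_of_mem hyA]
        have := Finset.card_pos.mpr ⟨y, hyA⟩
        omega
      have hBA' : B ⊆ A' := Finset.subset_erase.mpr ⟨hBA, hyB⟩
      have ihA' := ih A' B (by omega) hBA'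
      have hinsA : insert y A' = A := Finset.insert_erase hyA
      have hfilt : ∀ z ∈ A' \ B,
          (Dep rk (B ∪ A.filter (fun w => ord z < ord w)) z ↔
           Dep rk (B ∪ A'.filter (fun w => ord z < ord w)) z) := by
        intro z hz
        have hz' : z ∈ A \ B := by
          rw [hA'def] at hz
          simp only [Finset.mem_sdiff, Finset.mem_erase] at hz ⊢
          exact ⟨hz.1.2, hz.2⟩
        have hzy : ¬ (ord z < ord y) := Nat.not_lt.mpr (hymin z hz')
        have hfe : A'.filter (fun w => ord z < ord w) = A.filter (fun w => ord z < ord w) := by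
          rw [hA'def, Finset.filter_erase, Finset.erase_eq_of_notMem]
          simp only [Finset.mem_filter]
          tauto
        rw [hfe]
      have hsd : A \ B = insert y (A' \ B) := by
        rw [hA'def]
        ext z
        simp only [Finset.mem_sdiff, Finset.mem_insert, Finset.mem_erase]
        constructor
        · rintro ⟨hzA, hzB⟩
          by_cases hzy : z = y
          · exact Or.inl hzy
          · exact Or.inr ⟨⟨hzy, hzA⟩, hzB⟩
        · rintro (rfl | ⟨⟨hzy, hzA⟩, hzB⟩)
          · exact ⟨hyA, hyB⟩
          · exact ⟨hzA, hzB⟩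
      have hycount : Dep rk (B ∪ A.filter (fun w => ord y < ord w)) y ↔ Dep rk A' y := by
        rw [← hkey]
      have hfA' : ((A' \ B).filter (fun z => Dep rk (B ∪ A.filter (fun w => ord z < ord w)) z)).card
          = ((A' \ B).filter (fun z => Dep rk (B ∪ A'.filter (fun w => ord z < ord w)) z)).card := by
        congr 1
        apply Finset.filter_congr
        intro z hz
        exact hfilt z hz
      have hynot : y ∉ (A' \ B).filter
          (fun z => Dep rk (B ∪ A.filter (fun w => ord z < ord w)) z) := by
        simp only [Finset.mem_filter, Finset.mem_sdiff]
        tauto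
      have hcount : ((A \ B).filter (fun z => Dep rk (B ∪ A.filter (fun w => ord z < ord w)) z)).card
          = ((A' \ B).filter (fun z => Dep rk (B ∪ A'.filter (fun w => ord z < ord w)) z)).card
            + (if Dep rk A' y then 1 else 0) := by
        rw [hsd, Finset.filter_insert]
        by_cases hdep : Dep rk A' y
        · rw [if_pos (hycount.mpr hdep), if_pos hdep, Finset.card_insert_of_notMem hynot, hfA']
        · rw [if_neg (fun hc => hdep (hycount.mp hc)), if_neg hdep, hfA']
          omega
      rcases dep_or h A' y with hdep | hindep
      · have hrk : rk A = rk A' := by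
          rw [← hinsA]; exact hdep
        rw [hcount, if_pos hdep]
        omega
      · have hrk : rk A = rk A' + 1 := by
          rw [← hinsA]; exact hindep
        rw [hcount, if_neg (by unfold Dep; omega)]
        omega

section Chain

variable {k : ℕ}

lemma card_fin_lt (k t : ℕ) (ht : t ≤ k) :
    ((univ : Finset (Fin k)).filter (fun q : Fin k => (q : ℕ) < t)).card = t := by
  have hb : ((univ : Finset (Fin k)).filter (fun q : Fin k => (q : ℕ) < t)).card
      = (Finset.range t).card := by
    apply Finset.card_bij (fun (q : Fin k) _ => (q : ℕ))
    · intro a ha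
      simp only [Finset.mem_filter] at ha
      simp only [Finset.mem_range]
      exact ha.2
    · intro a _ b _ hab
      exact Fin.ext hab
    · intro b hb
      simp only [Finset.mem_range] at hb
      exact ⟨⟨b, lt_of_lt_of_le hb ht⟩, by simp [hb], rfl⟩
  simpa using hb

/-- number of sets in the chain not containing `x`. -/
def tau (f : Fin k → Finset α) (x : α) : ℕ :=
  ((univ : Finset (Fin k)).filter (fun i : Fin k => x ∉ f i)).card

lemma tau_le_k (f : Fin k → Finset α) (x : α) : tau f x ≤ k := by
  unfold tau
  calc ((univ : Finset (Fin k)).filter _).card ≤ (univ : Finset (Fin k)).card :=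
        Finset.card_filter_le _ _
    _ = k := by simp

lemma mem_iff_tau {f : Fin k → Finset α} (hf : ∀ i j : Fin k, i ≤ j → f i ⊆ f j)
    (x : α) (q : Fin k) : x ∈ f q ↔ tau f x ≤ (q : ℕ) := by
  constructor
  · intro hx
    have hsub : ((univ : Finset (Fin k)).filter (fun i : Fin k => x ∉ f i)) ⊆
        ((univ : Finset (Fin k)).filter (fun i : Fin k => (i : ℕ) < (q : ℕ))) := by
      intro j hj
      simp only [Finset.mem_filter, Finset.mem_univ, true_and] at hj ⊢
      by_contra hq
      push_neg at hq
      exact hj (hf q j (by exact Fin.le_def.mpr hq) hx)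
    have := Finset.card_le_card hsub
    rwa [card_fin_lt k q (le_of_lt q.isLt)] at this
  · intro hq
    by_contra hx
    have hsub : ((univ : Finset (Fin k)).filter (fun i : Fin k => (i : ℕ) < (q : ℕ) + 1)) ⊆
        ((univ : Finset (Fin k)).filter (fun i : Fin k => x ∉ f i)) := by
      intro j hj
      simp only [Finset.mem_filter, Finset.mem_univ, true_and] at hj ⊢
      intro hxj
      exact hx (hf j q (by exact Fin.le_def.mpr (by omega)) hxj)
    have := Finset.card_le_card hsub
    rw [card_fin_lt k ((q : ℕ) + 1) q.isLt] at this
    unfold tau at hq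
    omega

/-- union of all previous sets of the chain (equals `f (p-1)` for a chain). -/
def prevS (f : Fin k → Finset α) (p : ℕ) : Finset α :=
  ((univ : Finset (Fin k)).filter (fun j : Fin k => (j : ℕ) < p)).biUnion f

/-- the `p`-th set, as a function of `ℕ`. -/
def fS (f : Fin k → Finset α) (p : ℕ) : Finset α :=
  if hp : p < k then f ⟨p, hp⟩ else ∅

lemma fS_eq {f : Fin k → Finset α} {p : ℕ} (hp : p < k) : fS f p = f ⟨p, hp⟩ := dif_pos hp

lemma mem_fS {f : Fin k → Finset α} (hf : ∀ i j : Fin k, i ≤ j → f i ⊆ f j)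
    {x : α} {p : ℕ} : x ∈ fS f p ↔ p < k ∧ tau f x ≤ p := by
  unfold fS
  split
  · next hp => rw [mem_iff_tau hf]; simp [hp]
  · next hp => simp [hp]

lemma mem_prevS {f : Fin k → Finset α} (hf : ∀ i j : Fin k, i ≤ j → f i ⊆ f j)
    {x : α} {p : ℕ} (hp : p ≤ k) : x ∈ prevS f p ↔ tau f x < p := by
  unfold prevS
  simp only [Finset.mem_biUnion, Finset.mem_filter, Finset.mem_univ, true_and]
  constructor
  · rintro ⟨j, hj, hxj⟩
    have := (mem_iff_tau hf x j).mp hxj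
    omega
  · intro ht
    have htk : tau f x < k := by omega
    refine ⟨⟨tau f x, htk⟩, by simpa using ht, ?_⟩
    rw [mem_iff_tau hf]

lemma prevS_subset_fS {f : Fin k → Finset α} (hf : ∀ i j : Fin k, i ≤ j → f i ⊆ f j)
    {p : ℕ} (hp : p < k) : prevS f p ⊆ fS f p := by
  intro z hz
  rw [mem_prevS hf (le_of_lt hp)] at hz
  rw [mem_fS hf]
  omega

lemma fS_subset_prevS_succ {f : Fin k → Finset α} (hf : ∀ i j : Fin k, i ≤ j → f i ⊆ f j)
    {p : ℕ} (hp : p + 1 ≤ k) : fS f p ⊆ prevS f (p + 1) := by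
  intro z hz
  rw [mem_fS hf] at hz
  rw [mem_prevS hf hp]
  omega

/-- dependence condition at level `p`. -/
def DS (rk : Finset α → ℕ) (f : Fin k → Finset α) (p : ℕ) (x : α) : Prop :=
  p < k ∧ Dep rk (prevS f p ∪ (fS f p).filter (fun z => ord x < ord z)) x

noncomputable instance (rk : Finset α → ℕ) (f : Fin k → Finset α) (p : ℕ) (x : α) :
    Decidable (DS rk f p x) := inferInstanceAs (Decidable (_ ∧ _))

def Active (rk : Finset α → ℕ) (f : Fin k → Finset α) (x : α) : Prop :=
  ((k - tau f x) % 2 = 1 ∧ DS rk f (tau f x) x) ∨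
  ((k - tau f x) % 2 = 0 ∧ 1 ≤ tau f x ∧ DS rk f (tau f x - 1) x)

noncomputable instance (rk : Finset α → ℕ) (f : Fin k → Finset α) (x : α) :
    Decidable (Active rk f x) := inferInstanceAs (Decidable (_ ∨ _))

def pval (f : Fin k → Finset α) (x : α) : ℕ :=
  if (k - tau f x) % 2 = 1 then tau f x else tau f x - 1

def tauNew (f : Fin k → Finset α) (x : α) : ℕ :=
  if (k - tau f x) % 2 = 1 then tau f x + 1 else tau f x - 1

def Fixd (rk : Finset α → ℕ) (f : Fin k → Finset α) : Prop := ∀ x : α, ¬ Active rk f x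

noncomputable instance (rk : Finset α → ℕ) (f : Fin k → Finset α) : Decidable (Fixd rk f) :=
  inferInstanceAs (Decidable (∀ _, _))

def toggle (f : Fin k → Finset α) (x : α) : Fin k → Finset α :=
  fun q => if (q : ℕ) = pval f x then
    (if x ∈ f q then (f q).erase x else insert x (f q)) else f q

section ToggleFacts

variable {rk : Finset α → ℕ} {f : Fin k → Finset α} {x : α}

lemma Active.cases (hx : Active rk f x) :
    (pval f x = tau f x ∧ tauNew f x = tau f x + 1 ∧ (k - tau f x) % 2 = 1 ∧ tau f x < k) ∨
    (pval f x + 1 = tau f x ∧ tauNew f x + 1 = tau f x ∧ (k - tau f x) % 2 = 0 ∧ tau f x ≤ k) := by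
  rcases hx with ⟨h1, h2, _⟩ | ⟨h1, h2, h3, _⟩
  · exact Or.inl ⟨by simp [pval, h1], by simp [tauNew, h1], h1, h2⟩
  · exact Or.inr ⟨by simp [pval, h1]; omega, by simp [tauNew, h1]; omega, h1, tau_le_k f x⟩

lemma Active.pval_lt (hx : Active rk f x) : pval f x < k := by
  rcases hx with ⟨h1, h2, _⟩ | ⟨h1, h2, h3, _⟩
  · simpa [pval, h1] using h2
  · simp [pval, h1]; omega

lemma Active.dep (hx : Active rk f x) :
    Dep rk (prevS f (pval f x) ∪ (fS f (pval f x)).filter (fun z => ord x < ord z)) x := by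
  rcases hx with ⟨h1, _, h2⟩ | ⟨h1, _, _, h2⟩
  · simpa [pval, h1] using h2
  · simpa [pval, h1] using h2

lemma union_erase_left {A B : Finset α} {x : α} (hx : x ∉ A) :
    A ∪ B.erase x = (A ∪ B).erase x := by
  ext z
  simp only [Finset.mem_union, Finset.mem_erase]
  constructor
  · rintro (hz | ⟨hzx, hz⟩)
    · exact ⟨fun hc => hx (hc ▸ hz), Or.inl hz⟩
    · exact ⟨hzx, Or.inr hz⟩
  · rintro ⟨hzx, hz | hz⟩
    · exact Or.inl hz
    · exact Or.inr ⟨hzx, hz⟩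

lemma erase_union_right {A B : Finset α} {x : α} (hx : x ∉ B) :
    A.erase x ∪ B = (A ∪ B).erase x := by
  ext z
  simp only [Finset.mem_union, Finset.mem_erase]
  constructor
  · rintro (⟨hzx, hz⟩ | hz)
    · exact ⟨hzx, Or.inl hz⟩
    · exact ⟨fun hc => hx (hc ▸ hz), Or.inr hz⟩
  · rintro ⟨hzx, hz | hz⟩
    · exact Or.inl ⟨hzx, hz⟩
    · exact Or.inr hz

lemma erase_union_of_mem {A B : Finset α} {x : α} (hx : x ∈ B) :
    A.erase x ∪ B = A ∪ B := by
  ext z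
  simp only [Finset.mem_union, Finset.mem_erase]
  constructor
  · rintro (⟨_, hz⟩ | hz)
    · exact Or.inl hz
    · exact Or.inr hz
  · by_cases hzx : z = x
    · subst hzx
      intro _
      exact Or.inr hx
    · rintro (hz | hz)
      · exact Or.inl ⟨hzx, hz⟩
      · exact Or.inr hz

/-- the witness set for the toggle. -/
noncomputable def S0 (rk : Finset α → ℕ) (f : Fin k → Finset α) (x : α) : Finset α :=
  prevS f (pval f x) ∪ (fS f (pval f x)).filter (fun z => ord x < ord z)

lemma Active.depS0 (hx : Active rk f x) : Dep rk (S0 rk f x) x := hx.dep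

lemma x_not_prevS_pval (hf : ∀ i j : Fin k, i ≤ j → f i ⊆ f j) (hx : Active rk f x) :
    x ∉ prevS f (pval f x) := by
  rw [mem_prevS hf (le_of_lt hx.pval_lt)]
  rcases hx.cases with ⟨hp, _, _, _⟩ | ⟨hp, _, _, _⟩ <;> omega

lemma x_not_S0 (hf : ∀ i j : Fin k, i ≤ j → f i ⊆ f j) (hx : Active rk f x) :
    x ∉ S0 rk f x := by
  rw [S0, Finset.mem_union]
  rintro (hc | hc)
  · exact x_not_prevS_pval hf hx hc
  · simp only [Finset.mem_filter] at hc
    omega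

lemma S0_subset (hf : ∀ i j : Fin k, i ≤ j → f i ⊆ f j) (hx : Active rk f x) :
    S0 rk f x ⊆ fS f (pval f x) :=
  Finset.union_subset (prevS_subset_fS hf hx.pval_lt) (Finset.filter_subset _ _)

lemma mem_toggle_ne {z : α} (hzx : z ≠ x) (q : Fin k) :
    z ∈ toggle f x q ↔ z ∈ f q := by
  unfold toggle
  split
  · split
    · simp [Finset.mem_erase, hzx]
    · simp [Finset.mem_insert, hzx]
  · exact Iff.rfl

lemma x_mem_f_iff_pval (hf : ∀ i j : Fin k, i ≤ j → f i ⊆ f j) (hx : Active rk f x)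
    {q : Fin k} (hq : (q : ℕ) = pval f x) :
    (x ∈ f q ↔ (k - tau f x) % 2 = 1) := by
  rw [mem_iff_tau hf]
  rcases hx.cases with ⟨hp, _, hpar, _⟩ | ⟨hp, _, hpar, _⟩
  · simp [hpar]; omega
  · simp [hpar]; omega

lemma mem_toggle_self (hf : ∀ i j : Fin k, i ≤ j → f i ⊆ f j) (hx : Active rk f x)
    (q : Fin k) : x ∈ toggle f x q ↔ tauNew f x ≤ (q : ℕ) := by
  unfold toggle
  by_cases hq : (q : ℕ) = pval f x
  · rw [if_pos hq]
    rcases hx.cases with ⟨hp, ht, hpar, hlt⟩ | ⟨hp, ht, hpar, hle⟩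
    · have hxq : x ∈ f q := (x_mem_f_iff_pval hf hx hq).mpr hpar
      rw [if_pos hxq]
      constructor
      · intro hc
        exact absurd hc (Finset.notMem_erase x _)
      · intro hc
        omega
    · have hxq : x ∉ f q := by
        rw [x_mem_f_iff_pval hf hx hq, hpar]
        omega
      rw [if_neg hxq]
      constructor
      · intro _
        omega
      · intro _
        exact Finset.mem_insert_self x _
  · rw [if_neg hq, mem_iff_tau hf]
    rcases hx.cases with ⟨hp, ht, hpar, hlt⟩ | ⟨hp, ht, hpar, hle⟩ <;> omega

lemma toggle_chain (hf : ∀ i j : Fin k, i ≤ j → f i ⊆ f j) (hx : Active rk f x) :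
    ∀ i j : Fin k, i ≤ j → toggle f x i ⊆ toggle f x j := by
  intro i j hij z hz
  by_cases hzx : z = x
  · subst hzx
    rw [mem_toggle_self hf hx] at hz ⊢
    have : (i : ℕ) ≤ (j : ℕ) := Fin.le_def.mp hij
    omega
  · rw [mem_toggle_ne hzx] at hz ⊢
    exact hf i j hij hz

lemma tau_eq_of {g : Fin k → Finset α} {t : ℕ} (htk : t ≤ k)
    (hmem : ∀ q : Fin k, x ∈ g q ↔ t ≤ (q : ℕ)) : tau g x = t := by
  unfold tau
  have hcong : ((univ : Finset (Fin k)).filter (fun i : Fin k => x ∉ g i)) =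
      ((univ : Finset (Fin k)).filter (fun q : Fin k => (q : ℕ) < t)) := by
    apply Finset.filter_congr
    intro q _
    rw [hmem q]
    exact not_le
  rw [hcong, card_fin_lt k t htk]

lemma tau_toggle_self (hf : ∀ i j : Fin k, i ≤ j → f i ⊆ f j) (hx : Active rk f x) :
    tau (toggle f x) x = tauNew f x := by
  apply tau_eq_of
  · rcases hx.cases with ⟨hp, ht, hpar, hlt⟩ | ⟨hp, ht, hpar, hle⟩ <;> omega
  · exact mem_toggle_self hf hx

lemma tau_toggle_ne {z : α} (hzx : z ≠ x) : tau (toggle f x) z = tau f z := by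
  unfold tau
  congr 1
  apply Finset.filter_congr
  intro q _
  rw [mem_toggle_ne hzx]

lemma pval_toggle_self (hf : ∀ i j : Fin k, i ≤ j → f i ⊆ f j) (hx : Active rk f x) :
    pval (toggle f x) x = pval f x := by
  unfold pval
  rw [tau_toggle_self hf hx]
  rcases hx.cases with ⟨hp, ht, hpar, hlt⟩ | ⟨hp, ht, hpar, hle⟩
  · rw [ht, if_neg (by omega), if_pos hpar]
    omega
  · have h1 : tauNew f x = tau f x - 1 := by omega
    rw [h1, if_pos (by omega), if_neg (by omega)]

lemma fS_pval_eq (hx : Active rk f x) {q : Fin k} (hq : (q : ℕ) = pval f x) :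
    fS f (pval f x) = f q := by
  rw [fS_eq hx.pval_lt]
  congr 1
  exact Fin.ext hq.symm

lemma rk_toggle (h : IsMatroidRk α rk) (hf : ∀ i j : Fin k, i ≤ j → f i ⊆ f j)
    (hx : Active rk f x) (q : Fin k) : rk (toggle f x q) = rk (f q) := by
  unfold toggle
  by_cases hq : (q : ℕ) = pval f x
  · rw [if_pos hq]
    have hfq : fS f (pval f x) = f q := fS_pval_eq hx hq
    have hsub : S0 rk f x ⊆ f q := hfq ▸ S0_subset hf hx
    split
    · next hmem =>
      apply rk_erase_of_dep h hmem
      exact dep_superset h hx.depS0 (Finset.subset_erase.mpr ⟨hsub, x_not_S0 hf hx⟩)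
    · next hmem =>
      exact dep_superset h hx.depS0 hsub
  · rw [if_neg hq]

lemma mem_prevS_toggle (hf : ∀ i j : Fin k, i ≤ j → f i ⊆ f j) (hx : Active rk f x)
    {p' : ℕ} (hp' : p' ≤ k) (z : α) :
    z ∈ prevS (toggle f x) p' ↔ (if z = x then tauNew f x < p' else tau f z < p') := by
  rw [mem_prevS (toggle_chain hf hx) hp']
  by_cases hzx : z = x
  · subst hzx
    rw [if_pos rfl, tau_toggle_self hf hx]
  · rw [if_neg hzx, tau_toggle_ne hzx]

lemma prevS_toggle_eq (hf : ∀ i j : Fin k, i ≤ j → f i ⊆ f j) (hx : Active rk f x)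
    {p' : ℕ} (hp' : p' ≤ k) (hne : p' ≠ pval f x + 1) :
    prevS (toggle f x) p' = prevS f p' := by
  ext z
  rw [mem_prevS_toggle hf hx hp', mem_prevS hf hp']
  by_cases hzx : z = x
  · subst hzx
    rw [if_pos rfl]
    rcases hx.cases with ⟨hp, ht, hpar, hlt⟩ | ⟨hp, ht, hpar, hle⟩ <;> omega
  · rw [if_neg hzx]

lemma prevS_toggle_succ_erase (hf : ∀ i j : Fin k, i ≤ j → f i ⊆ f j) (hx : Active rk f x)
    (hrem : (k - tau f x) % 2 = 1) (hp' : pval f x + 1 ≤ k) :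
    prevS (toggle f x) (pval f x + 1) = (prevS f (pval f x + 1)).erase x := by
  ext z
  rw [mem_prevS_toggle hf hx hp', Finset.mem_erase, mem_prevS hf hp']
  by_cases hzx : z = x
  · subst hzx
    rw [if_pos rfl]
    rcases hx.cases with ⟨hp, ht, hpar, hlt⟩ | ⟨hp, ht, hpar, hle⟩ <;> simp <;> omega
  · rw [if_neg hzx]
    simp [hzx]

lemma prevS_toggle_succ_insert (hf : ∀ i j : Fin k, i ≤ j → f i ⊆ f j) (hx : Active rk f x)
    (hins : (k - tau f x) % 2 = 0) (hp' : pval f x + 1 ≤ k) :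
    prevS (toggle f x) (pval f x + 1) = insert x (prevS f (pval f x + 1)) := by
  ext z
  rw [mem_prevS_toggle hf hx hp', Finset.mem_insert, mem_prevS hf hp']
  by_cases hzx : z = x
  · subst hzx
    rw [if_pos rfl]
    rcases hx.cases with ⟨hp, ht, hpar, hlt⟩ | ⟨hp, ht, hpar, hle⟩ <;> simp <;> omega
  · rw [if_neg hzx]
    simp [hzx]

lemma fS_toggle_ne {j : ℕ} (hj : j ≠ pval f x) : fS (toggle f x) j = fS f j := by
  unfold fS
  split
  · next hjk =>
    show toggle f x ⟨j, hjk⟩ = f ⟨j, hjk⟩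
    unfold toggle
    rw [if_neg hj]
  · rfl

lemma fS_toggle_self (hx : Active rk f x) :
    fS (toggle f x) (pval f x) =
      (if x ∈ fS f (pval f x) then (fS f (pval f x)).erase x
        else insert x (fS f (pval f x))) := by
  rw [fS_eq (p := pval f x) hx.pval_lt, fS_eq (p := pval f x) hx.pval_lt]
  show toggle f x ⟨pval f x, hx.pval_lt⟩ = _
  unfold toggle
  rw [if_pos rfl]

lemma DS_toggle (h : IsMatroidRk α rk) (hf : ∀ i j : Fin k, i ≤ j → f i ⊆ f j)
    (hx : Active rk f x) {z : α} (hzx : z ≠ x) (j : ℕ) :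
    DS rk (toggle f x) j z ↔ DS rk f j z := by
  unfold DS
  apply and_congr_right
  intro hj
  have hjk : j ≤ k := le_of_lt hj
  have hdep := hx.depS0
  have hxS0 := x_not_S0 hf hx
  by_cases hjp : j = pval f x
  · -- level pval
    subst hjp
    rw [prevS_toggle_eq hf hx hjk (by omega), fS_toggle_self hx]
    by_cases hmem : x ∈ fS f (pval f x)
    · rw [if_pos hmem, Finset.filter_erase]
      by_cases hord : ord z < ord x
      · rw [union_erase_left (x_not_prevS_pval hf hx)]
        apply dep_erase_iff h hdep hxS0
        apply Finset.union_subset Finset.subset_union_left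
        intro w hw
        simp only [Finset.mem_filter] at hw
        exact Finset.mem_union_right _ (Finset.mem_filter.mpr ⟨hw.1, lt_trans hord hw.2⟩)
      · rw [Finset.erase_eq_of_notMem (by simp only [Finset.mem_filter]; tauto)]
    · rw [if_neg hmem, Finset.filter_insert]
      by_cases hord : ord z < ord x
      · rw [if_pos hord, Finset.union_insert]
        apply dep_insert_iff' h hdep
        apply Finset.union_subset Finset.subset_union_left
        intro w hw
        simp only [Finset.mem_filter] at hw
        exact Finset.mem_union_right _ (Finset.mem_filter.mpr ⟨hw.1, lt_trans hord hw.2⟩)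
      · rw [if_neg hord]
  · by_cases hj1 : j = pval f x + 1
    · -- level pval + 1
      subst hj1
      rw [fS_toggle_ne (by omega)]
      have hS0sub : S0 rk f x ⊆ prevS f (pval f x + 1) :=
        subset_trans (S0_subset hf hx) (fS_subset_prevS_succ hf hjk)
      have hsub : S0 rk f x ⊆ prevS f (pval f x + 1) ∪
          (fS f (pval f x + 1)).filter (fun w => ord z < ord w) :=
        subset_trans hS0sub Finset.subset_union_left
      by_cases hrem : (k - tau f x) % 2 = 1
      · rw [prevS_toggle_succ_erase hf hx hrem hjk]
        by_cases hxF : x ∈ (fS f (pval f x + 1)).filter (fun w => ord z < ord w)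
        · rw [erase_union_of_mem hxF]
        · rw [erase_union_right hxF]
          exact dep_erase_iff h hdep hxS0 hsub z
      · rw [prevS_toggle_succ_insert hf hx (by omega) hjk, Finset.insert_union]
        exact dep_insert_iff' h hdep hsub z
    · -- other levels
      rw [prevS_toggle_eq hf hx hjk hj1, fS_toggle_ne hjp]

lemma active_toggle_ne (h : IsMatroidRk α rk) (hf : ∀ i j : Fin k, i ≤ j → f i ⊆ f j)
    (hx : Active rk f x) {z : α} (hzx : z ≠ x) :
    (Active rk (toggle f x) z ↔ Active rk f z) := by
  unfold Active
  rw [tau_toggle_ne hzx, DS_toggle h hf hx hzx, DS_toggle h hf hx hzx]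

lemma active_toggle_self (h : IsMatroidRk α rk) (hf : ∀ i j : Fin k, i ≤ j → f i ⊆ f j)
    (hx : Active rk f x) : Active rk (toggle f x) x := by
  have htau := tau_toggle_self hf hx
  have hprev : prevS (toggle f x) (pval f x) = prevS f (pval f x) :=
    prevS_toggle_eq hf hx (le_of_lt hx.pval_lt) (by omega)
  have hfilter : ((fS (toggle f x) (pval f x)).filter (fun z => ord x < ord z)) =
      ((fS f (pval f x)).filter (fun z => ord x < ord z)) := by
    rw [fS_toggle_self hx]
    split
    · rw [Finset.filter_erase, Finset.erase_eq_of_notMem (by simp)]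
    · rw [Finset.filter_insert, if_neg (by omega)]
  rcases hx.cases with ⟨hp, ht, hpar, hlt⟩ | ⟨hp, ht, hpar, hle⟩
  · -- removal: now even case
    right
    refine ⟨by omega, by omega, ?_⟩
    rw [htau, show tauNew f x - 1 = pval f x by omega]
    exact ⟨hx.pval_lt, by rw [hprev, hfilter]; exact hx.depS0⟩
  · -- insertion: now odd case
    left
    refine ⟨by omega, ?_⟩
    rw [htau, show tauNew f x = pval f x by omega]
    exact ⟨hx.pval_lt, by rw [hprev, hfilter]; exact hx.depS0⟩

lemma toggle_involutive (hf : ∀ i j : Fin k, i ≤ j → f i ⊆ f j) (hx : Active rk f x) :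
    toggle (toggle f x) x = f := by
  funext q
  show (if (q : ℕ) = pval (toggle f x) x then _ else _) = f q
  rw [pval_toggle_self hf hx]
  by_cases hq : (q : ℕ) = pval f x
  · rw [if_pos hq]
    have hinner : toggle f x q = (if x ∈ f q then (f q).erase x else insert x (f q)) := by
      unfold toggle
      rw [if_pos hq]
    by_cases hmem : x ∈ f q
    · rw [hinner, if_pos hmem, if_neg (Finset.notMem_erase x _)]
      exact Finset.insert_erase hmem
    · rw [hinner, if_neg hmem, if_pos (Finset.mem_insert_self x _)]
      exact Finset.erase_insert hmem
  · rw [if_neg hq]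
    show toggle f x q = f q
    unfold toggle
    rw [if_neg hq]

end ToggleFacts

section Parity

variable {rk : Finset α → ℕ} {f : Fin k → Finset α}

/-- count of dependent new elements at level `j`. -/
noncomputable def mS (rk : Finset α → ℕ) (f : Fin k → Finset α) (j : Fin k) : ℕ :=
  ((f j \ prevS f (j : ℕ)).filter
    (fun y => Dep rk (prevS f (j : ℕ) ∪ (f j).filter (fun z => ord y < ord z)) y)).card

lemma prevS_zero : prevS f 0 = ∅ := by
  unfold prevS
  have : ((univ : Finset (Fin k)).filter (fun j : Fin k => (j : ℕ) < 0)) = ∅ := by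
    apply Finset.filter_false_of_mem
    intro i _
    omega
  rw [this, Finset.biUnion_empty]

lemma prevS_succ (hf : ∀ i j : Fin k, i ≤ j → f i ⊆ f j) {p : ℕ} (hp : p < k) :
    prevS f (p + 1) = f ⟨p, hp⟩ := by
  ext z
  rw [mem_prevS hf (by omega), mem_iff_tau hf]
  show tau f z < p + 1 ↔ tau f z ≤ p
  omega

lemma prevS_subset_self (hf : ∀ i j : Fin k, i ≤ j → f i ⊆ f j) (j : Fin k) :
    prevS f (j : ℕ) ⊆ f j := by
  have := prevS_subset_fS hf j.isLt
  rwa [fS_eq j.isLt, Fin.eta] at this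

lemma scan_level (h : IsMatroidRk α rk) (hf : ∀ i j : Fin k, i ≤ j → f i ⊆ f j)
    (j : Fin k) :
    (f j).card + rk (prevS f (j : ℕ)) = (prevS f (j : ℕ)).card + rk (f j) + mS rk f j :=
  scan h ((f j).card) (f j) (prevS f (j : ℕ)) le_rfl (prevS_subset_self hf j)

lemma telescope (h : IsMatroidRk α rk) (hf : ∀ i j : Fin k, i ≤ j → f i ⊆ f j) :
    ∀ (p : ℕ) (hp : p < k), (f ⟨p, hp⟩).card = rk (f ⟨p, hp⟩) +
      ∑ j ∈ (univ : Finset (Fin k)).filter (fun j : Fin k => (j : ℕ) ≤ p), mS rk f j := by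
  intro p
  induction p with
  | zero =>
    intro hp
    have hsc := scan_level h hf ⟨0, hp⟩
    rw [show ((⟨0, hp⟩ : Fin k) : ℕ) = 0 from rfl, prevS_zero] at hsc
    have hfil : ((univ : Finset (Fin k)).filter (fun j : Fin k => (j : ℕ) ≤ 0)) = {⟨0, hp⟩} := by
      ext i
      simp only [Finset.mem_filter, Finset.mem_univ, true_and, Finset.mem_singleton]
      constructor
      · intro hi
        exact Fin.ext (show (i : ℕ) = 0 by omega)
      · intro hi
        subst hi
        rfl
    rw [hfil, Finset.sum_singleton]
    have h0 := h.1
    simp only [Finset.card_empty, h0] at hsc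
    omega
  | succ p ih =>
    intro hp
    have hpk : p < k := by omega
    have hsc := scan_level h hf ⟨p + 1, hp⟩
    rw [show ((⟨p + 1, hp⟩ : Fin k) : ℕ) = p + 1 from rfl, prevS_succ hf hpk] at hsc
    have hfil : ((univ : Finset (Fin k)).filter (fun j : Fin k => (j : ℕ) ≤ p + 1)) =
        insert ⟨p + 1, hp⟩ ((univ : Finset (Fin k)).filter (fun j : Fin k => (j : ℕ) ≤ p)) := by
      ext i
      simp only [Finset.mem_filter, Finset.mem_univ, true_and, Finset.mem_insert]
      constructor
      · intro hi
        by_cases hip : (i : ℕ) = p + 1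
        · exact Or.inl (Fin.ext hip)
        · exact Or.inr (by omega)
      · rintro (rfl | hi)
        · rfl
        · omega
    have hnotmem : (⟨p + 1, hp⟩ : Fin k) ∉
        ((univ : Finset (Fin k)).filter (fun j : Fin k => (j : ℕ) ≤ p)) := by
      simp only [Finset.mem_filter, Finset.mem_univ, true_and]
      omega
    rw [hfil, Finset.sum_insert hnotmem]
    have := ih hpk
    omega

lemma card_fin_ge (k : ℕ) (j : Fin k) :
    ((univ : Finset (Fin k)).filter (fun i : Fin k => (j : ℕ) ≤ (i : ℕ))).card
      = k - (j : ℕ) := by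
  have hco : ((univ : Finset (Fin k)).filter (fun i : Fin k => (j : ℕ) ≤ (i : ℕ))) =
      univ \ ((univ : Finset (Fin k)).filter (fun i : Fin k => (i : ℕ) < (j : ℕ))) := by
    ext i
    simp only [Finset.mem_filter, Finset.mem_univ, true_and, Finset.mem_sdiff]
    omega
  rw [hco, Finset.card_sdiff_of_subset (Finset.filter_subset _ _),
    card_fin_lt k (j : ℕ) (le_of_lt j.isLt)]
  simp

lemma sum_card_eq (h : IsMatroidRk α rk) (hf : ∀ i j : Fin k, i ≤ j → f i ⊆ f j) :
    ∑ i : Fin k, (f i).card = ∑ i : Fin k, rk (f i) +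
      ∑ j : Fin k, (k - (j : ℕ)) * mS rk f j := by
  have h1 : ∀ i : Fin k, (f i).card = rk (f i) +
      ∑ j ∈ (univ : Finset (Fin k)).filter (fun j : Fin k => (j : ℕ) ≤ (i : ℕ)), mS rk f j := by
    intro i
    have := telescope h hf (i : ℕ) i.isLt
    rwa [Fin.eta] at this
  calc ∑ i : Fin k, (f i).card
      = ∑ i : Fin k, (rk (f i) +
        ∑ j ∈ (univ : Finset (Fin k)).filter (fun j : Fin k => (j : ℕ) ≤ (i : ℕ)), mS rk f j) :=
        Finset.sum_congr rfl (fun i _ => h1 i)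
    _ = ∑ i : Fin k, rk (f i) + ∑ i : Fin k,
        ∑ j ∈ (univ : Finset (Fin k)).filter (fun j : Fin k => (j : ℕ) ≤ (i : ℕ)), mS rk f j :=
        Finset.sum_add_distrib
    _ = ∑ i : Fin k, rk (f i) + ∑ j : Fin k, (k - (j : ℕ)) * mS rk f j := by
        congr 1
        have hsw : ∀ i : Fin k,
            (∑ j ∈ (univ : Finset (Fin k)).filter (fun j : Fin k => (j : ℕ) ≤ (i : ℕ)),
              mS rk f j) = ∑ j : Fin k, if (j : ℕ) ≤ (i : ℕ) then mS rk f j else 0 := by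
          intro i
          rw [Finset.sum_filter]
        rw [Finset.sum_congr rfl (fun i _ => hsw i), Finset.sum_comm]
        apply Finset.sum_congr rfl
        intro j _
        have : (∑ i : Fin k, if (j : ℕ) ≤ (i : ℕ) then mS rk f j else 0) =
            ∑ i ∈ (univ : Finset (Fin k)).filter (fun i : Fin k => (j : ℕ) ≤ (i : ℕ)),
              mS rk f j := by
          rw [Finset.sum_filter]
        rw [this, Finset.sum_const, card_fin_ge, smul_eq_mul]

lemma mS_eq_zero_of_fixd (hf : ∀ i j : Fin k, i ≤ j → f i ⊆ f j) (hfx : Fixd rk f)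
    (j : Fin k) (hodd : (k - (j : ℕ)) % 2 = 1) : mS rk f j = 0 := by
  rw [mS, Finset.card_eq_zero]
  by_contra hne
  obtain ⟨y, hy⟩ := Finset.nonempty_iff_ne_empty.mpr hne
  simp only [Finset.mem_filter, Finset.mem_sdiff] at hy
  obtain ⟨⟨hyf, hyp⟩, hdep⟩ := hy
  have htau : tau f y = (j : ℕ) := by
    have h1 := (mem_iff_tau hf y j).mp hyf
    have h2 : ¬ tau f y < (j : ℕ) := fun hc => hyp ((mem_prevS hf (le_of_lt j.isLt)).mpr hc)
    omega
  apply hfx y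
  left
  refine ⟨by rw [htau]; exact hodd, ?_⟩
  rw [htau]
  refine ⟨j.isLt, ?_⟩
  rw [fS_eq j.isLt, Fin.eta]
  exact hdep

lemma fixd_sign (h : IsMatroidRk α rk) (hf : ∀ i j : Fin k, i ≤ j → f i ⊆ f j)
    (hfx : Fixd rk f) :
    (-1 : ℤ) ^ (∑ i : Fin k, (f i).card) = (-1) ^ (∑ i : Fin k, rk (f i)) := by
  rw [sum_card_eq h hf, pow_add]
  have heven : Even (∑ j : Fin k, (k - (j : ℕ)) * mS rk f j) := by
    apply Finset.even_sum
    intro j _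
    rcases Nat.even_or_odd (k - (j : ℕ)) with he | ho
    · exact he.mul_right _
    · rw [mS_eq_zero_of_fixd hf hfx j (Nat.odd_iff.mp ho), Nat.mul_zero]
      exact Even.zero
  rw [heven.neg_one_pow, mul_one]

end Parity

section Xsel

variable {rk : Finset α → ℕ}

noncomputable def xsel (rk : Finset α → ℕ) (f : Fin k → Finset α)
    (hne : ∃ x, Active rk f x) : α :=
  (Finset.exists_min_image ((univ : Finset α).filter (Active rk f)) ord
    (by obtain ⟨x, hx⟩ := hne
        exact ⟨x, Finset.mem_filter.mpr ⟨Finset.mem_univ x, hx⟩⟩)).choose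

lemma xsel_active {f : Fin k → Finset α} (hne : ∃ x, Active rk f x) :
    Active rk f (xsel rk f hne) := by
  have hspec := (Finset.exists_min_image ((univ : Finset α).filter (Active rk f)) ord
    (by obtain ⟨x, hx⟩ := hne
        exact ⟨x, Finset.mem_filter.mpr ⟨Finset.mem_univ x, hx⟩⟩)).choose_spec
  exact (Finset.mem_filter.mp hspec.1).2

lemma xsel_min {f : Fin k → Finset α} (hne : ∃ x, Active rk f x) {z : α}
    (hz : Active rk f z) : ord (xsel rk f hne) ≤ ord z := by
  have hspec := (Finset.exists_min_image ((univ : Finset α).filter (Active rk f)) ord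
    (by obtain ⟨x, hx⟩ := hne
        exact ⟨x, Finset.mem_filter.mpr ⟨Finset.mem_univ x, hx⟩⟩)).choose_spec
  exact hspec.2 z (Finset.mem_filter.mpr ⟨Finset.mem_univ z, hz⟩)

lemma xsel_eq {f : Fin k → Finset α} (hne : ∃ x, Active rk f x) {x : α}
    (hxa : Active rk f x) (hmin : ∀ z, Active rk f z → ord x ≤ ord z) :
    xsel rk f hne = x :=
  ord_inj (le_antisymm (xsel_min hne hxa) (hmin _ (xsel_active hne)))

end Xsel

end Chain

section Main

variable {rk : Finset α → ℕ} {k : ℕ} {f : Fin k → Finset α} {x : α}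

lemma exists_active_of_not_fixd (hnf : ¬ Fixd rk f) : ∃ x, Active rk f x := by
  by_contra hc
  push_neg at hc
  exact hnf hc

lemma toggle_ne_self (hx : Active rk f x) : toggle f x ≠ f := by
  intro hc
  have hpt := congrFun hc ⟨pval f x, hx.pval_lt⟩
  show False
  unfold toggle at hpt
  rw [if_pos rfl] at hpt
  by_cases hmem : x ∈ f ⟨pval f x, hx.pval_lt⟩
  · rw [if_pos hmem] at hpt
    exact (Finset.erase_eq_self.mp hpt) hmem
  · rw [if_neg hmem] at hpt
    exact hmem (Finset.insert_eq_self.mp hpt)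

lemma sum_card_toggle (hf : ∀ i j : Fin k, i ≤ j → f i ⊆ f j) (hx : Active rk f x) :
    (∑ q : Fin k, ((toggle f x) q).card = (∑ q : Fin k, (f q).card) + 1) ∨
    (∑ q : Fin k, (f q).card = (∑ q : Fin k, ((toggle f x) q).card) + 1) := by
  set pfin : Fin k := ⟨pval f x, hx.pval_lt⟩ with hpfin
  have hsp1 : ((toggle f x) pfin).card + ∑ q ∈ univ.erase pfin, ((toggle f x) q).card
      = ∑ q : Fin k, ((toggle f x) q).card :=
    Finset.add_sum_erase univ (fun q => ((toggle f x) q).card) (Finset.mem_univ pfin)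
  have hsp2 : (f pfin).card + ∑ q ∈ univ.erase pfin, (f q).card
      = ∑ q : Fin k, (f q).card :=
    Finset.add_sum_erase univ (fun q => (f q).card) (Finset.mem_univ pfin)
  have hrest : ∑ q ∈ univ.erase pfin, ((toggle f x) q).card
      = ∑ q ∈ univ.erase pfin, (f q).card := by
    apply Finset.sum_congr rfl
    intro q hq
    have hqp : (q : ℕ) ≠ pval f x := by
      intro hc
      exact (Finset.mem_erase.mp hq).1 (Fin.ext hc)
    show (toggle f x q).card = (f q).card
    unfold toggle
    rw [if_neg hqp]
  have htog : toggle f x pfin = if x ∈ f pfin then (f pfin).erase x else insert x (f pfin) := by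
    show (if (pfin : ℕ) = pval f x then _ else _) = _
    rw [if_pos rfl]
  by_cases hmem : x ∈ f pfin
  · right
    rw [htog, if_pos hmem] at hsp1
    have hce : ((f pfin).erase x).card = (f pfin).card - 1 := Finset.card_erase_of_mem hmem
    have hcp : 1 ≤ (f pfin).card := Finset.card_pos.mpr ⟨x, hmem⟩
    omega
  · left
    rw [htog, if_neg hmem] at hsp1
    have hce : (insert x (f pfin)).card = (f pfin).card + 1 := Finset.card_insert_of_notMem hmem
    omega

lemma prod_CX {σ : Type*} [DecidableEq σ] (s : Finset σ) (n : σ → ℕ) (c : σ → ℤ) :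
    (∏ i ∈ s, (MvPolynomial.C (c i) * MvPolynomial.X i ^ n i))
      = MvPolynomial.monomial (∑ i ∈ s, Finsupp.single i (n i)) (∏ i ∈ s, c i) := by
  induction s using Finset.cons_induction with
  | empty => simp
  | cons a s ha ih =>
    rw [Finset.prod_cons, Finset.sum_cons, Finset.prod_cons, ih,
      MvPolynomial.X_pow_eq_monomial, MvPolynomial.C_mul_monomial,
      MvPolynomial.monomial_mul, mul_one]

lemma sum_single_apply {k : ℕ} (n : Fin k → ℕ) (i : Fin k) :
    (∑ j : Fin k, Finsupp.single j (n j)) i = n i := by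
  rw [Finset.sum_apply']
  simp only [Finsupp.single_apply]
  rw [Finset.sum_ite_eq' univ i n]
  simp

lemma sum_single_eq_iff {k : ℕ} (n : Fin k → ℕ) (d : Fin k →₀ ℕ) :
    (∑ i : Fin k, Finsupp.single i (n i)) = d ↔ ∀ i, n i = d i := by
  constructor
  · intro H i
    have := DFunLike.congr_fun H i
    rwa [sum_single_apply] at this
  · intro H
    ext i
    rw [sum_single_apply]
    exact H i

lemma coeff_chainCharPoly (rk : Finset α → ℕ) (k : ℕ) (d : Fin k →₀ ℕ) :
    MvPolynomial.coeff d (chainCharPoly rk k) =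
      ∑ f ∈ (chains α k).filter
          (fun f => ∀ i, rk Finset.univ - rk (f i) = (d i : ℕ)),
        ∏ i, (-1 : ℤ) ^ (f i).card := by
  unfold chainCharPoly
  rw [MvPolynomial.coeff_sum, Finset.sum_filter]
  apply Finset.sum_congr rfl
  intro f _
  rw [prod_CX univ (fun i => rk Finset.univ - rk (f i)) (fun i => (-1 : ℤ) ^ (f i).card),
    MvPolynomial.coeff_monomial]
  by_cases hcond : ∀ i, rk Finset.univ - rk (f i) = (d i : ℕ)
  · rw [if_pos ((sum_single_eq_iff _ d).mpr hcond), if_pos hcond]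
  · rw [if_neg (fun hc => hcond ((sum_single_eq_iff _ d).mp hc)), if_neg hcond]

end Main

end ChainAlt

/-- the coefficients of χᵏ_M alternate in sign by total degree:
the coefficient of t₁^{d₁}⋯t_k^{d_k} has sign (−1)^{k·rk(M) − (d₁+⋯+d_k)}
whenever it is nonzero (equivalently, sign (−1)^{k·rk(M) + (d₁+⋯+d_k)}). -/
theorem chainCharPoly_coeff_alternate {α : Type*} [DecidableEq α] [Fintype α]
    (rk : Finset α → ℕ) (h : IsMatroidRk α rk) (hs : IsSimpleRk rk) (k : ℕ)
    (d : Fin k →₀ ℕ) (hd : MvPolynomial.coeff d (chainCharPoly rk k) ≠ 0) :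
    0 < (-1 : ℤ) ^ (k * rk Finset.univ + ∑ i, d i) *
        MvPolynomial.coeff d (chainCharPoly rk k) := by
  have hchain : ∀ f ∈ (chains α k).filter
      (fun f => ∀ i, rk Finset.univ - rk (f i) = (d i : ℕ)),
      ∀ i j : Fin k, i ≤ j → f i ⊆ f j := by
    intro f hf
    exact (Finset.mem_filter.mp (Finset.mem_filter.mp hf).1).2
  rw [ChainAlt.coeff_chainCharPoly] at hd ⊢
  set S := (chains α k).filter
      (fun f => ∀ i, rk Finset.univ - rk (f i) = (d i : ℕ)) with hSdef
  rw [← Finset.sum_filter_add_sum_filter_not S (fun f => ChainAlt.Fixd rk f)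
      (fun f => ∏ i, (-1 : ℤ) ^ (f i).card)] at hd ⊢
  have hzero : ∑ f ∈ S.filter (fun f => ¬ ChainAlt.Fixd rk f),
      (∏ i, (-1 : ℤ) ^ (f i).card) = 0 := by
    apply Finset.sum_involution
      (g := fun f hf => ChainAlt.toggle f (ChainAlt.xsel rk f
        (ChainAlt.exists_active_of_not_fixd (Finset.mem_filter.mp hf).2)))
    · -- signs cancel
      intro f hf
      have hch : ∀ i j : Fin k, i ≤ j → f i ⊆ f j := hchain f (Finset.mem_filter.mp hf).1
      have hne := ChainAlt.exists_active_of_not_fixd (f := f) (Finset.mem_filter.mp hf).2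
      have hx : ChainAlt.Active rk f (ChainAlt.xsel rk f hne) := ChainAlt.xsel_active hne
      rw [Finset.prod_pow_eq_pow_sum, Finset.prod_pow_eq_pow_sum]
      rcases ChainAlt.sum_card_toggle hch hx with hc | hc
      · rw [hc, pow_succ]
        ring
      · rw [hc, pow_succ]
        ring
    · -- g f ≠ f
      intro f hf _
      have hne := ChainAlt.exists_active_of_not_fixd (f := f) (Finset.mem_filter.mp hf).2
      exact ChainAlt.toggle_ne_self (ChainAlt.xsel_active hne)
    · -- involution
      intro f hf
      have hfS := (Finset.mem_filter.mp hf).1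
      have hch : ∀ i j : Fin k, i ≤ j → f i ⊆ f j := hchain f hfS
      have hne := ChainAlt.exists_active_of_not_fixd (f := f) (Finset.mem_filter.mp hf).2
      set x := ChainAlt.xsel rk f hne with hxdef
      have hx : ChainAlt.Active rk f x := ChainAlt.xsel_active hne
      have hne2 : ∃ z, ChainAlt.Active rk (ChainAlt.toggle f x) z :=
        ⟨x, ChainAlt.active_toggle_self h hch hx⟩
      have hxsel2 : ∀ hne', ChainAlt.xsel rk (ChainAlt.toggle f x) hne' = x := by
        intro hne'
        apply ChainAlt.xsel_eq hne' (ChainAlt.active_toggle_self h hch hx)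
        intro z hz
        by_cases hzx : z = x
        · subst hzx
          exact le_refl _
        · exact ChainAlt.xsel_min hne ((ChainAlt.active_toggle_ne h hch hx hzx).mp hz)
      rw [hxsel2]
      exact ChainAlt.toggle_involutive hch hx
    · -- membership
      intro f hf
      have hfS := (Finset.mem_filter.mp hf).1
      have hch : ∀ i j : Fin k, i ≤ j → f i ⊆ f j := hchain f hfS
      have hcond : ∀ i, rk Finset.univ - rk (f i) = (d i : ℕ) :=
        (Finset.mem_filter.mp hfS).2
      have hne := ChainAlt.exists_active_of_not_fixd (f := f) (Finset.mem_filter.mp hf).2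
      have hx : ChainAlt.Active rk f (ChainAlt.xsel rk f hne) := ChainAlt.xsel_active hne
      refine Finset.mem_filter.mpr ⟨Finset.mem_filter.mpr ⟨?_, ?_⟩, ?_⟩
      · exact Finset.mem_filter.mpr ⟨Finset.mem_univ _, ChainAlt.toggle_chain hch hx⟩
      · intro i
        rw [ChainAlt.rk_toggle h hch hx i]
        exact hcond i
      · intro hfx
        exact hfx _ (ChainAlt.active_toggle_self h hch hx)
  rw [hzero, add_zero] at hd ⊢
  -- now only fixed chains remain
  have hr : True := trivial
  have hconst : ∀ f ∈ S.filter (fun f => ChainAlt.Fixd rk f),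
      (∏ i, (-1 : ℤ) ^ (f i).card) = (-1) ^ (∑ i : Fin k, (rk Finset.univ - (d i : ℕ))) := by
    intro f hf
    have hfS := (Finset.mem_filter.mp hf).1
    have hch : ∀ i j : Fin k, i ≤ j → f i ⊆ f j := hchain f hfS
    have hcond : ∀ i, rk Finset.univ - rk (f i) = (d i : ℕ) := (Finset.mem_filter.mp hfS).2
    have hfx : ChainAlt.Fixd rk f := (Finset.mem_filter.mp hf).2
    rw [Finset.prod_pow_eq_pow_sum, ChainAlt.fixd_sign h hch hfx]
    congr 1
    apply Finset.sum_congr rfl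
    intro i _
    have hle : rk (f i) ≤ rk Finset.univ := h.2.2.1 _ _ (Finset.subset_univ (f i))
    have hci := hcond i
    clear_value S
    clear hd hzero hchain hSdef hcond hf hfS hfx hch S
    omega
  have hsc := Finset.sum_congr rfl hconst
  rw [hsc, Finset.sum_const, nsmul_eq_mul]
  set N := (S.filter (fun f => ChainAlt.Fixd rk f)).card with hNdef
  have hFne : (S.filter (fun f => ChainAlt.Fixd rk f)).Nonempty := by
    rcases Finset.eq_empty_or_nonempty (S.filter (fun f => ChainAlt.Fixd rk f)) with he | hne2
    · rw [he, Finset.sum_empty] at hd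
      exact absurd rfl hd
    · exact hne2
  have hN0 : N ≠ 0 := by
    rw [hNdef]
    exact Finset.card_ne_zero.mpr hFne
  have hNpos : (0 : ℤ) < (N : ℤ) := by
    exact_mod_cast Nat.pos_of_ne_zero hN0
  -- extract d i ≤ r
  obtain ⟨f₀, hf₀⟩ := hFne
  have hcond₀ : ∀ i, rk Finset.univ - rk (f₀ i) = (d i : ℕ) := (Finset.mem_filter.mp
    (Finset.mem_filter.mp hf₀).1).2
  have hdle : ∀ i : Fin k, (d i : ℕ) ≤ rk Finset.univ := by
    intro i
    have hle : rk (f₀ i) ≤ rk Finset.univ := h.2.2.1 _ _ (Finset.subset_univ (f₀ i))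
    have hci := hcond₀ i
    clear hd hzero hsc
    omega
  have hsum : (∑ i : Fin k, (d i : ℕ)) + (∑ i : Fin k, (rk Finset.univ - (d i : ℕ))) = k * rk Finset.univ := by
    rw [← Finset.sum_add_distrib]
    have : ∀ i ∈ (univ : Finset (Fin k)), (d i : ℕ) + (rk Finset.univ - (d i : ℕ)) = rk Finset.univ := by
      intro i _
      have hci := hdle i
      clear hd hzero hsc
      omega
    have hsc2 := Finset.sum_congr rfl this
    rw [hsc2, Finset.sum_const, Finset.card_univ, Fintype.card_fin, smul_eq_mul]
  have hpow : ((-1 : ℤ) ^ (k * rk Finset.univ + ∑ i, (d i : ℕ))) * ((-1 : ℤ) ^ (∑ i : Fin k, (rk Finset.univ - (d i : ℕ))))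
      = 1 := by
    rw [← pow_add]
    apply Even.neg_one_pow
    refine ⟨k * rk Finset.univ, ?_⟩
    clear hd hzero hsc
    omega
  calc (0 : ℤ) < (N : ℤ) := hNpos
    _ = (-1 : ℤ) ^ (k * rk Finset.univ + ∑ i, (d i : ℕ)) *
        ((N : ℤ) * (-1 : ℤ) ^ (∑ i : Fin k, (rk Finset.univ - (d i : ℕ)))) := by
      rw [mul_comm (N : ℤ) _, ← mul_assoc, hpow, one_mul]
end

section
/- For any graph G, the number of 2-tuples of functions (f_1, f_2) from V to color sets of sizes t_1 and t_2 such that for every edge {a,b}, f_1(a)=f_1(b) implies f_2(a)=f_2(b), equals Σ_{A ⊆ E} (−1)^{|A|} t_1^{c(A)} · χ_{G|_A}(t_2), where c(A) is the number of connected components of (V,A) and χ_{G|_A} is the chromatic polynomial of the subgraph (V,A). -/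
open Finset

/-- Number of connected components of the spanning subgraph with edge set `A`. -/
noncomputable def numComp {V : Type*} (A : Finset (Sym2 V)) : ℕ :=
  Nat.card (SimpleGraph.fromEdgeSet (A : Set (Sym2 V))).ConnectedComponent

/-- Number of proper colorings of the spanning subgraph `(V, A)` with `t` colors. -/
noncomputable def chromCount {V : Type*} (A : Finset (Sym2 V)) (t : ℕ) : ℕ :=
  Nat.card {f : V → Fin t //
    ∀ a b : V, (SimpleGraph.fromEdgeSet (A : Set (Sym2 V))).Adj a b → f a ≠ f b}

namespace CoupledAux

open SimpleGraph

variable {V : Type*}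

lemma resp_reachable {H : SimpleGraph V} {β : Type*} {f : V → β}
    (hf : ∀ a b, H.Adj a b → f a = f b) {v w : V} (h : H.Reachable v w) : f v = f w := by
  obtain ⟨p⟩ := h
  induction p with
  | nil => rfl
  | cons h p ih => exact (hf _ _ h).trans ih

noncomputable def monoEquiv (H : SimpleGraph V) (t : ℕ) :
    {f : V → Fin t // ∀ a b, H.Adj a b → f a = f b} ≃ (H.ConnectedComponent → Fin t) where
  toFun f := Quot.lift f.1 fun _ _ h => resp_reachable f.2 h
  invFun g := ⟨fun v => g (H.connectedComponentMk v),
    fun a b hab => congrArg g (ConnectedComponent.sound hab.reachable)⟩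
  left_inv f := rfl
  right_inv g := by
    funext c
    induction c using SimpleGraph.ConnectedComponent.ind with
    | _ v => rfl

lemma mono_card (H : SimpleGraph V) [Finite V] (t : ℕ) :
    Nat.card {f : V → Fin t // ∀ a b, H.Adj a b → f a = f b}
      = t ^ Nat.card H.ConnectedComponent := by
  rw [Nat.card_congr (monoEquiv H t), Nat.card_fun, Nat.card_eq_fintype_card, Fintype.card_fin]

/-- the "bad on edge e" predicate -/
def Pp {t₁ t₂ : ℕ} (p : (V → Fin t₁) × (V → Fin t₂)) (e : Sym2 V) : Prop :=
  Sym2.lift ⟨fun a b => p.1 a = p.1 b ∧ p.2 a ≠ p.2 b, by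
    intro a b
    rw [eq_iff_iff]
    constructor <;> rintro ⟨h1, h2⟩ <;> exact ⟨h1.symm, fun h => h2 h.symm⟩⟩ e

@[simp] lemma Pp_mk {t₁ t₂ : ℕ} (p : (V → Fin t₁) × (V → Fin t₂)) (a b : V) :
    Pp p s(a, b) ↔ p.1 a = p.1 b ∧ p.2 a ≠ p.2 b := Iff.rfl

lemma card_all_bad [Fintype V] {t₁ t₂ : ℕ} (G : SimpleGraph V) [DecidableRel G.Adj]
    (A : Finset (Sym2 V)) (hA : A ∈ G.edgeFinset.powerset) :
    Nat.card {p : (V → Fin t₁) × (V → Fin t₂) // ∀ e ∈ A, Pp p e}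
      = t₁ ^ numComp A * chromCount A t₂ := by
  rw [mem_powerset] at hA
  have key : ∀ p : (V → Fin t₁) × (V → Fin t₂),
      (∀ e ∈ A, Pp p e) ↔
      ((∀ a b, (fromEdgeSet (A : Set (Sym2 V))).Adj a b → p.1 a = p.1 b) ∧
       (∀ a b, (fromEdgeSet (A : Set (Sym2 V))).Adj a b → p.2 a ≠ p.2 b)) := by
    intro p
    constructor
    · intro h
      constructor <;> intro a b hab <;>
      · rw [fromEdgeSet_adj] at hab
        have := h s(a, b) (by simpa using hab.1)
        rw [Pp_mk] at this
        first | exact this.1 | exact this.2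
    · rintro ⟨h1, h2⟩ e he
      induction e with
      | _ a b =>
        have hne : a ≠ b := by
          have := G.not_isDiag_of_mem_edgeSet (SimpleGraph.mem_edgeFinset.mp (hA he))
          simpa [Sym2.isDiag_iff_proj_eq] using this
        have hadj : (fromEdgeSet (A : Set (Sym2 V))).Adj a b :=
          (fromEdgeSet_adj _).mpr ⟨by simpa using he, hne⟩
        exact ⟨h1 a b hadj, h2 a b hadj⟩
  rw [Nat.card_congr ((Equiv.subtypeEquivRight key).trans (Equiv.subtypeProdEquivProd
      (p := fun f : V → Fin t₁ => ∀ a b, (fromEdgeSet (A : Set (Sym2 V))).Adj a b → f a = f b)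
      (q := fun f : V → Fin t₂ => ∀ a b, (fromEdgeSet (A : Set (Sym2 V))).Adj a b → f a ≠ f b))),
    Nat.card_prod, mono_card, numComp, chromCount]

end CoupledAux

open CoupledAux

theorem coupled_two_multicoloring_count {V : Type*} [Fintype V] [DecidableEq V]
    (G : SimpleGraph V) [DecidableRel G.Adj] (t₁ t₂ : ℕ) :
    (Nat.card {p : (V → Fin t₁) × (V → Fin t₂) //
        ∀ a b : V, G.Adj a b → p.1 a = p.1 b → p.2 a = p.2 b} : ℤ) =
      ∑ A ∈ G.edgeFinset.powerset,
        (-1 : ℤ) ^ A.card * (t₁ : ℤ) ^ (numComp A) * (chromCount A t₂ : ℤ) := by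
  classical
  have hcond : ∀ p : (V → Fin t₁) × (V → Fin t₂),
      (∀ a b : V, G.Adj a b → p.1 a = p.1 b → p.2 a = p.2 b)
        ↔ ∀ e ∈ G.edgeFinset, ¬ Pp p e := by
    intro p
    constructor
    · intro h e he
      induction e with
      | _ a b =>
        rw [Pp_mk]
        rintro ⟨h1, h2⟩
        exact h2 (h a b (SimpleGraph.mem_edgeFinset.mp he) h1)
    · intro h a b hab h1
      have := h s(a, b) (SimpleGraph.mem_edgeFinset.mpr hab)
      rw [Pp_mk] at this
      by_contra h2
      exact this ⟨h1, h2⟩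
  calc (Nat.card {p : (V → Fin t₁) × (V → Fin t₂) //
        ∀ a b : V, G.Adj a b → p.1 a = p.1 b → p.2 a = p.2 b} : ℤ)
      = ∑ p : (V → Fin t₁) × (V → Fin t₂),
          ∏ e ∈ G.edgeFinset, ((-(if Pp p e then (1 : ℤ) else 0)) + 1) := by
        rw [Nat.card_eq_fintype_card, Fintype.card_subtype, Finset.natCast_card_filter]
        apply Finset.sum_congr rfl
        intro p _
        rw [if_congr (hcond p) rfl rfl]
        have : ∀ e ∈ G.edgeFinset, ((-if Pp p e then (1:ℤ) else 0) + 1)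
            = if ¬ Pp p e then 1 else 0 := by
          intro e _; by_cases h : Pp p e <;> simp [h]
        rw [Finset.prod_congr rfl this, Finset.prod_boole]
        simp
    _ = ∑ p : (V → Fin t₁) × (V → Fin t₂), ∑ A ∈ G.edgeFinset.powerset,
          (-1 : ℤ) ^ A.card * (if ∀ e ∈ A, Pp p e then 1 else 0) := by
        apply Finset.sum_congr rfl
        intro p _
        rw [Finset.prod_add]
        apply Finset.sum_congr rfl
        intro A _
        rw [Finset.prod_const_one, mul_one]
        have : ∀ i ∈ A, (-if Pp p i then (1:ℤ) else 0) = (-1) * (if Pp p i then 1 else 0) := by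
          intro i _; ring
        rw [Finset.prod_congr rfl this, Finset.prod_mul_distrib, Finset.prod_const,
          Finset.prod_boole]
        simp
    _ = ∑ A ∈ G.edgeFinset.powerset, (-1 : ℤ) ^ A.card *
          (Nat.card {p : (V → Fin t₁) × (V → Fin t₂) // ∀ e ∈ A, Pp p e} : ℤ) := by
        rw [Finset.sum_comm]
        apply Finset.sum_congr rfl
        intro A _
        rw [← Finset.mul_sum, Nat.card_eq_fintype_card, Fintype.card_subtype,
          Finset.natCast_card_filter]
    _ = ∑ A ∈ G.edgeFinset.powerset,
        (-1 : ℤ) ^ A.card * (t₁ : ℤ) ^ (numComp A) * (chromCount A t₂ : ℤ) := by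
        apply Finset.sum_congr rfl
        intro A hA
        rw [card_all_bad G A hA]
        push_cast
        ring
end

section
/- For any matroid M, the Möbius polynomial satisfies 𝓜_M(s,t) = s^{rk(M)} · χ²_M(s^{-1}, t), where 𝓜_M(s,t) = Σ over pairs of flats X ≤ Y of μ(X,Y) s^{rk(X)} t^{rk(M)−rk(Y)} and χ²_M is the 2nd chain characteristic polynomial. -/
open Finset

section Helpers
variable {α : Type*} [DecidableEq α] [Fintype α] {rk : Finset α → ℕ}

lemma rk_insert_eq_of_subset (h : IsMatroidRk α rk) {S A : Finset α} {e : α}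
    (hSA : S ⊆ A) (he : rk (insert e S) = rk S) : rk (insert e A) = rk A := by
  obtain ⟨-, -, hmono, hsub⟩ := h
  have h1 : insert e S ∪ A = insert e A := by
    rw [insert_union, union_eq_right.2 hSA]
  have h2 := hsub (insert e S) A
  rw [h1, he] at h2
  have h3 : rk S ≤ rk (insert e S ∩ A) :=
    hmono _ _ (subset_inter (subset_insert e S) hSA)
  have h4 : rk (insert e A) ≤ rk A := by omega
  exact le_antisymm h4 (hmono _ _ (subset_insert e A))

lemma rk_union_eq (h : IsMatroidRk α rk) {S T : Finset α}
    (hT : ∀ a ∈ T, rk (insert a S) = rk S) : rk (S ∪ T) = rk S := by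
  classical
  induction T using Finset.induction_on with
  | empty => simp
  | @insert a T ha ih =>
    rw [union_insert]
    rw [rk_insert_eq_of_subset h subset_union_left (hT a (mem_insert_self a T))]
    exact ih fun a ha => hT a (mem_insert_of_mem ha)

/-- Closure of a set. -/
def mcl (rk : Finset α → ℕ) (S : Finset α) : Finset α :=
  S ∪ univ.filter (fun a => rk (insert a S) = rk S)

lemma subset_mcl (S : Finset α) : S ⊆ mcl rk S := subset_union_left

lemma rk_mcl (h : IsMatroidRk α rk) (S : Finset α) : rk (mcl rk S) = rk S := by
  apply rk_union_eq h
  intro a ha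
  exact (mem_filter.1 ha).2

lemma mcl_flat (h : IsMatroidRk α rk) (S : Finset α) : IsFlat rk (mcl rk S) := by
  intro a ha
  have haS : a ∉ S := fun hh => ha (subset_mcl S hh)
  have hne : rk (insert a S) ≠ rk S := by
    intro hh; exact ha (mem_union_right _ (mem_filter.2 ⟨mem_univ a, hh⟩))
  have h1 : rk S < rk (insert a S) :=
    lt_of_le_of_ne (h.2.2.1 _ _ (subset_insert a S)) (Ne.symm hne)
  have h2 : rk (insert a S) ≤ rk (insert a (mcl rk S)) :=
    h.2.2.1 _ _ (insert_subset_insert _ (subset_mcl S))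
  rw [rk_mcl h]
  omega

lemma mcl_subset_flat (h : IsMatroidRk α rk) {S Y : Finset α}
    (hY : IsFlat rk Y) (hSY : S ⊆ Y) : mcl rk S ⊆ Y := by
  intro a ha
  rcases mem_union.1 ha with haS | haf
  · exact hSY haS
  · by_contra haY
    have := hY a haY
    rw [rk_insert_eq_of_subset h hSY (mem_filter.1 haf).2] at this
    omega

lemma mcl_eq_of_flat (h : IsMatroidRk α rk) {S : Finset α}
    (hS : IsFlat rk S) : mcl rk S = S :=
  subset_antisymm (mcl_subset_flat h hS subset_rfl) (subset_mcl S)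

lemma subset_iff_mcl_subset (h : IsMatroidRk α rk) {S Y : Finset α}
    (hY : IsFlat rk Y) : mcl rk S ⊆ Y ↔ S ⊆ Y :=
  ⟨fun hh => (subset_mcl S).trans hh, fun hh => mcl_subset_flat h hY hh⟩

end Helpers

section Helpers2
variable {α : Type*} [DecidableEq α] [Fintype α] {rk : Finset α → ℕ}

/-- The inner sum vanishes when `S` is not a flat. -/
lemma inner_vanish (h : IsMatroidRk α rk) {S : Finset α} (hS : ¬ IsFlat rk S)
    {R : Type*} [CommRing R] (t : R) :
    ∑ B ∈ (univ \ S).powerset,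
      (-1 : R) ^ B.card * t ^ (rk univ - rk (S ∪ B)) = 0 := by
  simp only [IsFlat, not_forall, not_lt] at hS
  obtain ⟨e, heS, he⟩ := hS
  have heq : rk (insert e S) = rk S :=
    le_antisymm he (h.2.2.1 _ _ (subset_insert e S))
  have heu : e ∈ univ \ S := mem_sdiff.2 ⟨mem_univ e, heS⟩
  have hrw : univ \ S = insert e ((univ \ S).erase e) := (insert_erase heu).symm
  rw [hrw, Finset.sum_powerset_insert (notMem_erase e _)]
  rw [← Finset.sum_add_distrib]
  apply Finset.sum_eq_zero
  intro B hB
  have hBe : e ∉ B := fun hh =>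
    (notMem_erase e (univ \ S)) ((mem_powerset.1 hB) hh)
  have hc : (insert e B).card = B.card + 1 := card_insert_of_notMem hBe
  have hr : rk (S ∪ insert e B) = rk (S ∪ B) := by
    rw [union_insert]
    exact rk_insert_eq_of_subset h subset_union_left heq
  rw [hc, hr, pow_succ]
  ring

/-- integer coefficient: sum of signs over sets with given closure -/
def ccoef (rk : Finset α → ℕ) (S Y : Finset α) : ℤ :=
  ∑ B ∈ ((univ \ S).powerset.filter (fun B => mcl rk (S ∪ B) = Y)), (-1) ^ B.card

lemma ccoef_sum (h : IsMatroidRk α rk) {S Y : Finset α}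
    (hY : IsFlat rk Y) (hSY : S ⊆ Y) :
    ∑ Z ∈ Finset.univ.filter
        (fun Z : Finset α => IsFlat rk Z ∧ S ⊆ Z ∧ Z ⊆ Y), ccoef rk S Z =
      if S = Y then 1 else 0 := by
  unfold ccoef
  rw [Finset.sum_fiberwise_eq_sum_filter]
  have hset : (univ \ S).powerset.filter
      (fun B => mcl rk (S ∪ B) ∈ Finset.univ.filter
        (fun Z : Finset α => IsFlat rk Z ∧ S ⊆ Z ∧ Z ⊆ Y)) = (Y \ S).powerset := by
    ext B
    simp only [mem_filter, mem_powerset, mem_univ, true_and]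
    constructor
    · rintro ⟨hB, -, -, hcl⟩
      intro b hb
      exact mem_sdiff.2 ⟨hcl ((subset_mcl _) (mem_union_right _ hb)), (mem_sdiff.1 (hB hb)).2⟩
    · intro hB
      refine ⟨hB.trans (sdiff_subset_sdiff (subset_univ Y) subset_rfl),
        mcl_flat h _, (subset_union_left).trans (subset_mcl _), ?_⟩
      rw [subset_iff_mcl_subset h hY]
      exact union_subset hSY (hB.trans sdiff_subset)
  rw [hset, Finset.sum_powerset_neg_one_pow_card]
  by_cases hc : S = Y
  · subst hc; simp
  · rw [if_neg hc, if_neg]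
    intro hYS
    exact hc (subset_antisymm hSY (sdiff_eq_empty_iff_subset.1 hYS))

lemma ccoef_eq_mu (h : IsMatroidRk α rk) (μ : Finset α → Finset α → ℤ)
    (hμdiag : ∀ G : Finset α, IsFlat rk G → μ G G = 1)
    (hμrec : ∀ X Y : Finset α, IsFlat rk X → IsFlat rk Y → X ⊆ Y → X ≠ Y →
      ∑ Z ∈ Finset.univ.filter
          (fun Z : Finset α => IsFlat rk Z ∧ X ⊆ Z ∧ Z ⊆ Y), μ X Z = 0)
    {S : Finset α} (hS : IsFlat rk S) :
    ∀ Y : Finset α, IsFlat rk Y → S ⊆ Y → ccoef rk S Y = μ S Y := by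
  intro Y
  induction Y using Finset.strongInduction with
  | _ Y ih =>
    intro hY hSY
    by_cases hSeqY : S = Y
    · subst hSeqY
      have hfilt : Finset.univ.filter
          (fun Z : Finset α => IsFlat rk Z ∧ S ⊆ Z ∧ Z ⊆ S) = {S} := by
        ext Z
        simp only [mem_filter, mem_univ, true_and, mem_singleton]
        constructor
        · rintro ⟨-, h1, h2⟩; exact (subset_antisymm h1 h2).symm
        · rintro rfl; exact ⟨hS, subset_rfl, subset_rfl⟩
      have := ccoef_sum h hY hSY
      rw [hfilt, Finset.sum_singleton, if_pos rfl] at this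
      rw [this, hμdiag S hS]
    · have hYmem : Y ∈ Finset.univ.filter
          (fun Z : Finset α => IsFlat rk Z ∧ S ⊆ Z ∧ Z ⊆ Y) :=
        mem_filter.2 ⟨mem_univ Y, hY, hSY, subset_rfl⟩
      have h1 := ccoef_sum h hY hSY
      rw [if_neg hSeqY, ← Finset.sum_erase_add _ _ hYmem] at h1
      have h2 := hμrec S Y hS hY hSY hSeqY
      rw [← Finset.sum_erase_add _ _ hYmem] at h2
      have h3 : ∀ Z ∈ (Finset.univ.filter
          (fun Z : Finset α => IsFlat rk Z ∧ S ⊆ Z ∧ Z ⊆ Y)).erase Y,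
          ccoef rk S Z = μ S Z := by
        intro Z hZ
        have hZ' := mem_filter.1 (mem_of_mem_erase hZ)
        have hZY : Z ⊂ Y := ssubset_of_subset_of_ne hZ'.2.2.2 (ne_of_mem_erase hZ)
        exact ih Z hZY hZ'.2.1 hZ'.2.2.1
      rw [Finset.sum_congr rfl h3] at h1
      linarith

lemma inner_flat (h : IsMatroidRk α rk) (μ : Finset α → Finset α → ℤ)
    (hμdiag : ∀ G : Finset α, IsFlat rk G → μ G G = 1)
    (hμrec : ∀ X Y : Finset α, IsFlat rk X → IsFlat rk Y → X ⊆ Y → X ≠ Y →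
      ∑ Z ∈ Finset.univ.filter
          (fun Z : Finset α => IsFlat rk Z ∧ X ⊆ Z ∧ Z ⊆ Y), μ X Z = 0)
    {S : Finset α} (hS : IsFlat rk S) {R : Type*} [CommRing R] (t : R) :
    ∑ B ∈ (univ \ S).powerset,
      (-1 : R) ^ B.card * t ^ (rk univ - rk (S ∪ B)) =
    ∑ Y ∈ Finset.univ.filter (fun Y : Finset α => IsFlat rk Y ∧ S ⊆ Y),
      (μ S Y : R) * t ^ (rk univ - rk Y) := by
  have hall : (univ \ S).powerset = (univ \ S).powerset.filter
      (fun B => mcl rk (S ∪ B) ∈ Finset.univ.filter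
        (fun Y : Finset α => IsFlat rk Y ∧ S ⊆ Y)) := by
    ext B
    simp only [mem_filter, mem_powerset, mem_univ, true_and]
    exact ⟨fun hB => ⟨hB, mcl_flat h _, subset_union_left.trans (subset_mcl _)⟩,
      fun hB => hB.1⟩
  rw [hall, ← Finset.sum_fiberwise_eq_sum_filter]
  apply Finset.sum_congr rfl
  intro Y hY
  obtain ⟨-, hYflat, hSY⟩ := mem_filter.1 hY
  have hfib : ∀ B ∈ (univ \ S).powerset.filter (fun B => mcl rk (S ∪ B) = Y),
      (-1 : R) ^ B.card * t ^ (rk univ - rk (S ∪ B)) =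
      (-1 : R) ^ B.card * t ^ (rk univ - rk Y) := by
    intro B hB
    have hcl := (mem_filter.1 hB).2
    have : rk (S ∪ B) = rk Y := by rw [← hcl, rk_mcl h]
    rw [this]
  rw [Finset.sum_congr rfl hfib, ← Finset.sum_mul,
    ← ccoef_eq_mu h μ hμdiag hμrec hS Y hYflat hSY]
  unfold ccoef
  push_cast
  ring
end Helpers2

/-- the Möbius polynomial satisfies
𝓜_M(s,t) = s^{rk M} · χ²_M(s⁻¹, t), where μ is the Möbius function of the
lattice of flats, characterized by its defining recursion. -/
theorem mobiusPoly_eq_chainChar2 {α : Type*} [DecidableEq α] [Fintype α]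
    (rk : Finset α → ℕ) (h : IsMatroidRk α rk) (μ : Finset α → Finset α → ℤ)
    (hμdiag : ∀ F : Finset α, IsFlat rk F → μ F F = 1)
    (hμrec : ∀ X Y : Finset α, IsFlat rk X → IsFlat rk Y → X ⊆ Y → X ≠ Y →
      ∑ Z ∈ Finset.univ.filter
          (fun Z : Finset α => IsFlat rk Z ∧ X ⊆ Z ∧ Z ⊆ Y), μ X Z = 0)
    {F : Type*} [Field F] (s t : F) (hs : s ≠ 0) :
    (∑ p ∈ Finset.univ.filter
        (fun p : Finset α × Finset α =>
          IsFlat rk p.1 ∧ IsFlat rk p.2 ∧ p.1 ⊆ p.2),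
      (μ p.1 p.2 : F) * s ^ (rk p.1) * t ^ (rk Finset.univ - rk p.2)) =
      s ^ (rk Finset.univ) * chainChar rk 2 ![s⁻¹, t] := by
  classical
  have hmono := h.2.2.1
  -- Step 1: the chain sum as a sum over pairs.
  have step1 : chainChar rk 2 ![s⁻¹, t] =
      ∑ p ∈ (univ : Finset (Finset α × Finset α)).filter (fun p => p.1 ⊆ p.2),
        ((-1 : F) ^ p.1.card * s⁻¹ ^ (rk Finset.univ - rk p.1)) *
          ((-1 : F) ^ p.2.card * t ^ (rk Finset.univ - rk p.2)) := by
    unfold chainChar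
    refine Finset.sum_nbij' (fun f => (f 0, f 1)) (fun p => ![p.1, p.2]) ?_ ?_ ?_ ?_ ?_
    · intro f hf
      simp only [chains, mem_filter, mem_univ, true_and] at hf ⊢
      exact hf 0 1 (by decide)
    · intro p hp
      simp only [chains, mem_filter, mem_univ, true_and] at hp ⊢
      intro i j hij
      fin_cases i <;> fin_cases j <;>
        simp_all <;> exact absurd hij (by decide)
    · intro f hf
      funext x
      fin_cases x <;> simp
    · intro p hp
      simp
    · intro f hf
      rw [Fin.prod_univ_two]
      simp
  have hpow : ∀ A : Finset α, s ^ rk (Finset.univ : Finset α) *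
      s⁻¹ ^ (rk (Finset.univ : Finset α) - rk A) = s ^ rk A := by
    intro A
    have hle : rk A ≤ rk (Finset.univ : Finset α) := hmono _ _ (subset_univ A)
    have hsplit : s ^ rk (Finset.univ : Finset α) =
        s ^ rk A * s ^ (rk (Finset.univ : Finset α) - rk A) := by
      rw [← pow_add, Nat.add_sub_cancel' hle]
    rw [hsplit, mul_assoc, inv_pow, mul_inv_cancel₀ (pow_ne_zero _ hs), mul_one]
  have step2 : ∀ p ∈ (univ : Finset (Finset α × Finset α)).filter (fun p => p.1 ⊆ p.2),
      s ^ rk (Finset.univ : Finset α) *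
        (((-1 : F) ^ p.1.card * s⁻¹ ^ (rk Finset.univ - rk p.1)) *
          ((-1 : F) ^ p.2.card * t ^ (rk Finset.univ - rk p.2))) =
      (-1 : F) ^ p.1.card * s ^ rk p.1 *
        ((-1 : F) ^ p.2.card * t ^ (rk Finset.univ - rk p.2)) := by
    intro p hp
    calc s ^ rk (Finset.univ : Finset α) *
        (((-1 : F) ^ p.1.card * s⁻¹ ^ (rk Finset.univ - rk p.1)) *
          ((-1 : F) ^ p.2.card * t ^ (rk Finset.univ - rk p.2)))
        = ((-1 : F) ^ p.1.card * ((-1 : F) ^ p.2.card * t ^ (rk Finset.univ - rk p.2))) *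
          (s ^ rk (Finset.univ : Finset α) * s⁻¹ ^ (rk Finset.univ - rk p.1)) := by ring
      _ = _ := by rw [hpow p.1]; ring
  -- Step 3: inner sum reparametrized
  have step3 : ∀ A1 : Finset α,
      (∑ A2 : Finset α, if A1 ⊆ A2 then
        (-1 : F) ^ A1.card * s ^ rk A1 *
          ((-1 : F) ^ A2.card * t ^ (rk Finset.univ - rk A2)) else 0) =
      s ^ rk A1 * ∑ B ∈ (univ \ A1).powerset,
        (-1 : F) ^ B.card * t ^ (rk Finset.univ - rk (A1 ∪ B)) := by
    intro A1
    rw [← Finset.sum_filter, Finset.mul_sum]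
    refine Finset.sum_nbij' (fun A2 => A2 \ A1) (fun B => A1 ∪ B) ?_ ?_ ?_ ?_ ?_
    · intro A2 hA2
      exact mem_powerset.2 (sdiff_subset_sdiff (subset_univ A2) subset_rfl)
    · intro B hB
      exact mem_filter.2 ⟨mem_univ _, subset_union_left⟩
    · intro A2 hA2
      exact union_sdiff_of_subset (mem_filter.1 hA2).2
    · intro B hB
      have hd : Disjoint A1 B := by
        have := mem_powerset.1 hB
        exact disjoint_left.2 fun a ha hb => (mem_sdiff.1 (this hb)).2 ha
      show (A1 ∪ B) \ A1 = B
      rw [union_sdiff_cancel_left hd]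
    · intro A2 hA2
      have hsub := (mem_filter.1 hA2).2
      have hcard : A2.card = (A2 \ A1).card + A1.card :=
        (card_sdiff_add_card_eq_card hsub).symm
      have hun : A1 ∪ A2 \ A1 = A2 := union_sdiff_of_subset hsub
      have h2 : (-1 : F) ^ A1.card * (-1 : F) ^ A1.card = 1 := by
        rw [← pow_add]; exact Even.neg_one_pow (Even.add_self _)
      rw [hun, hcard, pow_add]
      linear_combination s ^ rk A1 * (-1 : F) ^ (A2 \ A1).card *
        t ^ (rk Finset.univ - rk A2) * h2
  have hR : s ^ rk (Finset.univ : Finset α) * chainChar rk 2 ![s⁻¹, t] =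
      ∑ X ∈ (univ : Finset (Finset α)).filter (fun X => IsFlat rk X),
        s ^ rk X * ∑ Y ∈ (univ : Finset (Finset α)).filter
            (fun Y => IsFlat rk Y ∧ X ⊆ Y),
          (μ X Y : F) * t ^ (rk Finset.univ - rk Y) := by
    rw [step1, Finset.mul_sum, Finset.sum_congr rfl step2, Finset.sum_filter,
      Fintype.sum_prod_type]
    rw [Finset.sum_congr rfl (fun A1 (_ : A1 ∈ (univ : Finset (Finset α))) => step3 A1)]
    rw [← Finset.sum_subset (Finset.filter_subset (fun X => IsFlat rk X) univ)
      (fun X _ hX => by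
        rw [inner_vanish h (by simpa using hX) t, mul_zero])]
    apply Finset.sum_congr rfl
    intro X hX
    rw [inner_flat h μ hμdiag hμrec (by simpa using (mem_filter.1 hX).2) t]
  rw [hR, Finset.sum_filter, Fintype.sum_prod_type]
  rw [Finset.sum_congr rfl (fun X (_ : X ∈ (univ : Finset (Finset α))) => by
    rw [show (∑ Y : Finset α, if IsFlat rk (X, Y).1 ∧ IsFlat rk (X, Y).2 ∧ (X, Y).1 ⊆ (X, Y).2 then
          (μ (X, Y).1 (X, Y).2 : F) * s ^ rk (X, Y).1 * t ^ (rk Finset.univ - rk (X, Y).2) else 0) =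
        (if IsFlat rk X then (∑ Y : Finset α, if IsFlat rk Y ∧ X ⊆ Y then
          (μ X Y : F) * s ^ rk X * t ^ (rk Finset.univ - rk Y) else 0) else 0) from by
      by_cases hX : IsFlat rk X <;> simp [hX]])]
  rw [← Finset.sum_filter]
  apply Finset.sum_congr rfl
  intro X hX
  rw [← Finset.sum_filter, Finset.mul_sum]
  apply Finset.sum_congr rfl
  intro Y hY
  push_cast
  ring
end
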